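/- arXiv:1603.04843 — 10 statements merged into one kernel-verified Lean document; each statement's English description precedes it below -/
import Mathlib

section
/- A strictly positive probability distribution p on I belongs to the exponential family E_A if and only if the vector log p = (log p(i))_{i∈I} is orthogonal to the kernel of A (viewing A as a linear map ℝ^I → ℝ^J). -/
/-!
The members of `E_A` are exactly the distributions whose logarithm is an affine function
`i ↦ ⟨θ, f_i⟩ + d`, i.e. lies in the span of the rows of `A` and the constant vector `1`:
the normalising constant of a distribution of this form is forced to be `exp (-d)`. By finite
dimensional duality, a vector lies in that span iff it is orthogonal to every vector orthogonal
to all of its generators, which is the kernel of `Ã`.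
-/

/-- The discrete exponential family `E_A` as a set of distributions on `I`. -/
noncomputable def expFam {I J : Type} [Fintype I] [Fintype J] (A : J → I → ℝ) :
    Set (I → ℝ) :=
  {q | ∃ θ : J → ℝ, q = fun i =>
    Real.exp (∑ j, θ j * A j i - Real.log (∑ i', Real.exp (∑ j, θ j * A j i')))}

open Matrix Submodule

theorem Submodule.mem_span_iff_forall_dotProduct_eq_zero {𝕜 n : Type*} [Field 𝕜] [Fintype n]
    {s : Set (n → 𝕜)} {f : n → 𝕜} :
    f ∈ span 𝕜 s ↔ ∀ v, (∀ b ∈ s, b ⬝ᵥ v = 0) → f ⬝ᵥ v = 0 := by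
  classical
  constructor
  · intro hf v hv
    have hle : span 𝕜 s ≤ LinearMap.ker (dotProductEquiv 𝕜 n v) :=
      span_le.2 fun b hb => by simpa [dotProduct_comm] using hv b hb
    simpa [dotProduct_comm] using hle hf
  · intro h
    by_contra hf
    obtain ⟨φ, hφf, hφs⟩ := exists_dual_map_eq_bot_of_notMem hf inferInstance
    set v := (dotProductEquiv 𝕜 n).symm φ
    have hφ : ∀ x, φ x = x ⬝ᵥ v := fun x => by
      rw [dotProduct_comm, ← dotProductEquiv_apply_apply, LinearEquiv.apply_symm_apply]
    refine hφf ((hφ f).trans (h v fun b hb => ?_))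
    rw [← hφ]
    exact (mem_bot 𝕜).1 (hφs ▸ mem_map_of_mem (subset_span hb))

theorem mem_span_insert_one_range_iff {R I J : Type*} [CommSemiring R] [Fintype J]
    (A : J → I → R) (g : I → R) :
    g ∈ span R (insert 1 (Set.range A)) ↔
      ∃ (θ : J → R) (d : R), g = fun i => ∑ j, θ j * A j i + d := by
  simp only [mem_span_insert, mem_span_range_iff_exists_fun]
  constructor
  · rintro ⟨d, _, ⟨θ, rfl⟩, rfl⟩
    exact ⟨θ, d, by ext i; simp [Finset.sum_apply, add_comm]⟩
  · rintro ⟨θ, d, rfl⟩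
    exact ⟨d, _, ⟨θ, rfl⟩, by ext i; simp [Finset.sum_apply, add_comm]⟩

section ExpFam

variable {I J : Type} [Fintype I] [Fintype J] (A : J → I → ℝ)

theorem log_mem_span_of_mem_expFam {q : I → ℝ} (hq : q ∈ expFam A) :
    (fun i => Real.log (q i)) ∈ span ℝ (insert 1 (Set.range A)) := by
  obtain ⟨θ, rfl⟩ := hq
  exact (mem_span_insert_one_range_iff A _).2
    ⟨θ, -Real.log (∑ i', Real.exp (∑ j, θ j * A j i')), by
      ext i; simp only [Real.log_exp, sub_eq_add_neg]⟩

theorem mem_expFam_of_log_mem_span {p : I → ℝ} (hpos : ∀ i, 0 < p i) (hsum : ∑ i, p i = 1)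
    (hlog : (fun i => Real.log (p i)) ∈ span ℝ (insert 1 (Set.range A))) :
    p ∈ expFam A := by
  obtain ⟨θ, d, hθ⟩ := (mem_span_insert_one_range_iff A _).1 hlog
  have hp : ∀ i, p i = Real.exp (∑ j, θ j * A j i + d) := fun i => by
    rw [← congrFun hθ i, Real.exp_log (hpos i)]
  have hZ : ∑ i, Real.exp (∑ j, θ j * A j i) = Real.exp (-d) :=
    calc ∑ i, Real.exp (∑ j, θ j * A j i) = ∑ i, p i * Real.exp (-d) := by
          simp_rw [hp, ← Real.exp_add, add_neg_cancel_right]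
      _ = Real.exp (-d) := by rw [← Finset.sum_mul, hsum, one_mul]
  refine ⟨θ, funext fun i => ?_⟩
  rw [hZ, Real.log_exp, hp i, sub_neg_eq_add]

end ExpFam

theorem mem_expFam_iff_log_orth_ker_general {I J : Type} [Fintype I] [Fintype J]
    (A : J → I → ℝ) (p : I → ℝ) (hpos : ∀ i, 0 < p i) (hsum : ∑ i, p i = 1) :
    p ∈ expFam A ↔
      ∀ v : I → ℝ, (∀ j, ∑ i, A j i * v i = 0) → (∑ i, v i = 0) →
        ∑ i, Real.log (p i) * v i = 0 := by
  have hspan : p ∈ expFam A ↔ (fun i => Real.log (p i)) ∈ span ℝ (insert 1 (Set.range A)) :=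
    ⟨log_mem_span_of_mem_expFam A, mem_expFam_of_log_mem_span A hpos hsum⟩
  rw [hspan, mem_span_iff_forall_dotProduct_eq_zero]
  simp only [Set.forall_mem_insert, Set.forall_mem_range, one_dotProduct]
  exact ⟨fun h v hA h1 => h v ⟨h1, hA⟩, fun h v hv => h v hv.2 hv.1⟩

/-- A strictly positive probability distribution `p` on `I` belongs to `E_A` if
and only if `log p` is orthogonal to the kernel of `Ã`, i.e. `⟨log p, v⟩ = 0` for every
`v : I → ℝ` with `A v = 0` and `∑ i, v i = 0`. -/
theorem mem_expFam_iff_log_orth_ker {I J : Type} [Fintype I] [Fintype J] [Nonempty I]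
    (A : J → I → ℝ) (p : I → ℝ) (hpos : ∀ i, 0 < p i) (hsum : ∑ i, p i = 1) :
    p ∈ expFam A ↔
      ∀ v : I → ℝ, (∀ j, ∑ i, A j i * v i = 0) → (∑ i, v i = 0) →
        ∑ i, Real.log (p i) * v i = 0 :=
  mem_expFam_iff_log_orth_ker_general A p hpos hsum
end

section
/- For any facial set F of the convex support polytope P_A, the distributions p_{F,θ} defined by p_{F,θ}(i) = exp(⟨θ, f_i⟩ − k_F(θ)) for i ∈ F and p_{F,θ}(i) = 0 otherwise, with k_F(θ) = log Σ_{i∈F} exp(⟨θ, f_i⟩), all lie in the topological closure of the exponential family E_A. -/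
/-- `F` is a facial set of `P_A = conv{f_i}`: the set of indices of vertices lying on some
face of `P_A`, i.e. the set of maximizers of a linear functional `g` over the columns. -/
def FacialF {I J : Type} [Fintype I] [Fintype J] (A : J → I → ℝ) (F : Finset I) : Prop :=
  ∃ g : J → ℝ, ∀ i, i ∈ F ↔ ∀ i', ∑ j, g j * A j i' ≤ ∑ j, g j * A j i

/-- The truncation `p_{F,θ}` of the family to a facial set `F`. -/
noncomputable def ptrunc {I J : Type} [Fintype I] [Fintype J] [DecidableEq I]
    (A : J → I → ℝ) (F : Finset I) (θ : J → ℝ) (i : I) : ℝ :=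
  if i ∈ F then
    Real.exp (∑ j, θ j * A j i - Real.log (∑ i' ∈ F, Real.exp (∑ j, θ j * A j i')))
  else 0

open Filter

/-- For any facial set `F` of the convex support polytope `P_A`, all the
distributions `p_{F,θ}` lie in the topological closure (pointwise convergence) of `E_A`. -/
theorem ptrunc_mem_closure {I J : Type} [Fintype I] [Fintype J] [DecidableEq I] [Nonempty I]
    (A : J → I → ℝ) (F : Finset I) (hF : FacialF A F) (θ : J → ℝ) :
    ptrunc A F θ ∈ closure (expFam A) := by
  obtain ⟨g, hg⟩ := hF
  set c : I → ℝ := fun i => ∑ j, g j * A j i with hc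
  set t : I → ℝ := fun i => ∑ j, θ j * A j i with ht
  obtain ⟨i₀, -, hi₀⟩ := Finset.exists_max_image Finset.univ c
    ⟨Classical.arbitrary I, Finset.mem_univ _⟩
  set M : ℝ := c i₀ with hM
  have hi₀F : i₀ ∈ F := (hg i₀).mpr fun i' => hi₀ i' (Finset.mem_univ _)
  have hceq : ∀ i ∈ F, c i = M := fun i hi =>
    le_antisymm (hi₀ i (Finset.mem_univ i)) (((hg i).mp hi) i₀)
  have hclt : ∀ i ∉ F, c i < M := by
    intro i hi
    have h := (hg i).not.mp hi
    push_neg at h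
    obtain ⟨i', hi'⟩ := h
    exact lt_of_lt_of_le hi' (hi₀ i' (Finset.mem_univ _))
  set D : ℝ := ∑ i' ∈ F, Real.exp (t i') with hD
  have hDpos : 0 < D := Finset.sum_pos (fun i _ => Real.exp_pos _) ⟨i₀, hi₀F⟩
  set L : I → ℝ := fun i => if i ∈ F then Real.exp (t i) else 0 with hL
  set p : ℕ → I → ℝ := fun n i =>
    Real.exp (∑ j, (θ j + (n : ℝ) * g j) * A j i -
      Real.log (∑ i', Real.exp (∑ j, (θ j + (n : ℝ) * g j) * A j i'))) with hp
  have hmem : ∀ n, p n ∈ expFam A := fun n => ⟨fun j => θ j + (n : ℝ) * g j, rfl⟩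
  have hsum : ∀ (n : ℕ) (i : I), (∑ j, (θ j + (n : ℝ) * g j) * A j i) = t i + n * c i := by
    intro n i
    simp only [ht, hc, Finset.mul_sum, add_mul, Finset.sum_add_distrib]
    ring_nf
  have hpne : ∀ n i, p n i =
      Real.exp (t i + n * (c i - M)) / ∑ i', Real.exp (t i' + n * (c i' - M)) := by
    intro n i
    have hS : (0:ℝ) < ∑ i', Real.exp (t i' + n * c i') :=
      Finset.sum_pos (fun _ _ => Real.exp_pos _) Finset.univ_nonempty
    have h1 : p n i = Real.exp (t i + n * c i) / ∑ i', Real.exp (t i' + n * c i') := by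
      simp only [hp, hsum, Real.exp_sub, Real.exp_log hS]
    rw [h1,
      show (∑ i', Real.exp (t i' + n * (c i' - M))) =
        (∑ i', Real.exp (t i' + n * c i')) * Real.exp (-((n:ℝ) * M)) by
      rw [Finset.sum_mul]; refine Finset.sum_congr rfl fun i' _ => ?_
      rw [← Real.exp_add]; ring_nf,
      show Real.exp (t i + n * (c i - M)) = Real.exp (t i + n * c i) * Real.exp (-((n:ℝ) * M)) by
      rw [← Real.exp_add]; ring_nf,
      mul_div_mul_right _ _ (Real.exp_ne_zero _)]
  have hterm : ∀ i, Tendsto (fun n : ℕ => Real.exp (t i + n * (c i - M))) atTop (nhds (L i)) := by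
    intro i
    by_cases hi : i ∈ F
    · have h0 : c i - M = 0 := by rw [hceq i hi]; ring
      simp [h0, hi, hL]
    · have hneg : c i - M < 0 := sub_neg.mpr (hclt i hi)
      have h1 : Tendsto (fun n : ℕ => t i + (n : ℝ) * (c i - M)) atTop atBot :=
        tendsto_atBot_add_const_left _ _
          (tendsto_natCast_atTop_atTop.atTop_mul_const_of_neg hneg)
      simpa [hL, hi] using h1
  have hdenom : Tendsto (fun n : ℕ => ∑ i', Real.exp (t i' + n * (c i' - M))) atTop (nhds D) := by
    have h := tendsto_finset_sum Finset.univ (fun i (_ : i ∈ Finset.univ) => hterm i)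
    have hLD : ∑ i', L i' = D := by
      simp [hL, hD, Finset.sum_ite_mem, Finset.univ_inter]
    rwa [hLD] at h
  have hfin : Tendsto p atTop (nhds (ptrunc A F θ)) := by
    rw [tendsto_pi_nhds]
    intro i
    have hlim : Tendsto (fun n => p n i) atTop (nhds (L i / D)) := by
      simp only [hpne]
      exact (hterm i).div hdenom hDpos.ne'
    have heq : ptrunc A F θ i = L i / D := by
      by_cases hi : i ∈ F
      · simp only [ptrunc, hi, if_true, hL, hD, ht]
        rw [Real.exp_sub, Real.exp_log]
        exact Finset.sum_pos (fun i _ => Real.exp_pos _) ⟨i₀, hi₀F⟩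
      · simp [ptrunc, hi, hL]
    rw [heq]
    exact hlim
  exact mem_closure_of_tendsto hfin (Filter.Eventually.of_forall hmem)
end

section
/- If p lies in the topological closure of the discrete exponential family E_A, then the support of p is a facial set of the convex support polytope P_A. -/
/-!
Along a sequence `q n = p_{θ n}` converging to `p`, `log (q n i) = φ n (f_i)` for affine functions
`φ n`, and these values converge when `p i ≠ 0` and tend to `-∞` when `p i = 0`. Hence the convex
hull of `{f_i | p i = 0}` misses the affine span of `{f_i | p i ≠ 0}`, and Hahn–Banach separation
of this compact convex set from this closed affine subspace yields a linear functional that is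
constant on the support columns and strictly smaller on the others.
-/

open Filter Topology Set

section AffineAsymptotics

variable {E α : Type*} [AddCommGroup E] [Module ℝ E] {l : Filter α} {θ : α → E →ᵃ[ℝ] ℝ}

theorem tendsto_atBot_of_mem_convexHull {t : Set E} (ht : t.Finite)
    (h : ∀ y ∈ t, Tendsto (fun a => θ a y) l atBot) {x : E} (hx : x ∈ convexHull ℝ t) :
    Tendsto (fun a => θ a x) l atBot := by
  refine tendsto_atBot.2 fun M => ?_
  filter_upwards [(eventually_all_finite ht).2 fun y hy => tendsto_atBot.1 (h y hy) M] with a ha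
  exact convexHull_min ha ((convex_Iic M).affine_preimage (θ a)) hx

theorem exists_tendsto_of_mem_affineSpan {t : Set E}
    (h : ∀ y ∈ t, ∃ c, Tendsto (fun a => θ a y) l (𝓝 c)) {x : E} (hx : x ∈ affineSpan ℝ t) :
    ∃ c, Tendsto (fun a => θ a x) l (𝓝 c) := by
  refine affineSpan_induction hx h ?_
  rintro c u v w ⟨cu, hu⟩ ⟨cv, hv⟩ ⟨cw, hw⟩
  refine ⟨c * (cu - cv) + cw, ?_⟩
  have hθ : ∀ a, θ a (c • (u -ᵥ v) +ᵥ w) = c * (θ a u - θ a v) + θ a w := fun a => by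
    rw [AffineMap.map_vadd, map_smul, AffineMap.linearMap_vsub]; rfl
  simpa only [hθ] using ((hu.sub hv).const_mul c).add hw

theorem disjoint_convexHull_affineSpan_of_tendsto [l.NeBot] {ι : Type*} [Finite ι] {v : ι → E}
    {s : Set ι} (hs : ∀ i ∈ s, ∃ c, Tendsto (fun a => θ a (v i)) l (𝓝 c))
    (hsc : ∀ i ∉ s, Tendsto (fun a => θ a (v i)) l atBot) :
    Disjoint (convexHull ℝ (v '' sᶜ)) (affineSpan ℝ (v '' s) : Set E) := by
  refine Set.disjoint_left.2 fun x hxK hxP => ?_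
  obtain ⟨c, hc⟩ := exists_tendsto_of_mem_affineSpan (by rintro _ ⟨i, hi, rfl⟩; exact hs i hi) hxP
  exact not_tendsto_atBot_of_tendsto_nhds hc <| tendsto_atBot_of_mem_convexHull (toFinite _)
    (by rintro _ ⟨i, hi, rfl⟩; exact hsc i hi) hxK

end AffineAsymptotics

theorem LinearMap.apply_eq_apply_of_forall_lt {E : Type*} [AddCommGroup E] [Module ℝ E]
    (f : E →ₗ[ℝ] ℝ) {P : AffineSubspace ℝ E} {w : ℝ} (h : ∀ x ∈ P, w < f x) {x y : E}
    (hx : x ∈ P) (hy : y ∈ P) : f x = f y := by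
  by_contra hne
  have hd : f x - f y ≠ 0 := sub_ne_zero.2 hne
  -- the point of the line through `y` and `x` at which `f` takes the value `w`
  have := h _ (P.smul_vsub_vadd_mem ((w - f y) / (f x - f y)) hx hy hy)
  simp only [vsub_eq_sub, vadd_eq_add, map_add, map_smul, map_sub, smul_eq_mul,
    div_mul_cancel₀ _ hd, sub_add_cancel, lt_self_iff_false] at this

theorem exists_strongDual_mem_iff_forall_le {E : Type*} [AddCommGroup E] [Module ℝ E]
    [TopologicalSpace E] [IsTopologicalAddGroup E] [ContinuousSMul ℝ E] [LocallyConvexSpace ℝ E]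
    [T2Space E] {ι : Type*} [Finite ι] {v : ι → E} {s : Set ι} (hs : s.Nonempty)
    (hdisj : Disjoint (convexHull ℝ (v '' sᶜ)) (affineSpan ℝ (v '' s) : Set E)) :
    ∃ f : StrongDual ℝ E, ∀ i, i ∈ s ↔ ∀ j, f (v j) ≤ f (v i) := by
  have hclosed : IsClosed (affineSpan ℝ (v '' s) : Set E) :=
    (affineSpan ℝ _).isClosed_direction_iff.1 (Submodule.closed_of_finiteDimensional _)
  obtain ⟨f, u, w, hfu, huw, hwf⟩ := geometric_hahn_banach_compact_closed (convex_convexHull ℝ _)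
    ((toFinite _).isCompact_convexHull ℝ) (AffineSubspace.convex _) hclosed hdisj
  obtain ⟨i₀, hi₀⟩ := hs
  have hspan : ∀ i ∈ s, v i ∈ affineSpan ℝ (v '' s) :=
    fun i hi => subset_affineSpan ℝ _ (mem_image_of_mem v hi)
  have heq : ∀ i ∈ s, f (v i) = f (v i₀) :=
    fun i hi => f.toLinearMap.apply_eq_apply_of_forall_lt hwf (hspan i hi) (hspan i₀ hi₀)
  have hlt : ∀ j ∉ s, f (v j) < f (v i₀) := fun j hj =>
    (hfu _ (subset_convexHull ℝ _ (mem_image_of_mem v hj))).trans (huw.trans (hwf _ (hspan i₀ hi₀)))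
  refine ⟨f, fun i => ⟨fun hi j => ?_, fun hmax => ?_⟩⟩
  · rw [heq i hi]
    by_cases hj : j ∈ s
    exacts [(heq j hj).le, (hlt j hj).le]
  · by_contra hi
    exact (hmax i₀).not_gt (hlt i hi)

section ExponentialFamily

variable {I J : Type} [Fintype I] [Fintype J] {A : J → I → ℝ}

theorem exists_affineMap_of_mem_expFam {q : I → ℝ} (hq : q ∈ expFam A) :
    ∃ φ : (J → ℝ) →ᵃ[ℝ] ℝ, ∀ i, q i = Real.exp (φ fun j => A j i) := by
  obtain ⟨θ, rfl⟩ := hq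
  refine ⟨(dotProductBilin ℝ ℝ θ).toAffineMap -
    AffineMap.const ℝ _ (Real.log (∑ i', Real.exp (∑ j, θ j * A j i'))), fun i => ?_⟩
  simp [dotProduct]

theorem expFam_subset_stdSimplex [Nonempty I] : expFam A ⊆ stdSimplex ℝ I := by
  rintro _ ⟨θ, rfl⟩
  refine ⟨fun i => (Real.exp_pos _).le, ?_⟩
  have hZ : 0 < ∑ i', Real.exp (∑ j, θ j * A j i') :=
    Finset.sum_pos (fun _ _ => Real.exp_pos _) Finset.univ_nonempty
  simp only [Real.exp_sub, Real.exp_log hZ, ← Finset.sum_div, div_self hZ.ne']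

end ExponentialFamily

theorem support_facial_of_mem_closure_general {I J : Type} [Fintype I] [Fintype J]
    (A : J → I → ℝ) (p : I → ℝ) (hp : p ∈ closure (expFam A)) :
    ∃ g : J → ℝ, ∀ i, p i ≠ 0 ↔ ∀ i', ∑ j, g j * A j i' ≤ ∑ j, g j * A j i := by
  classical
  cases isEmpty_or_nonempty I
  · exact ⟨0, isEmptyElim⟩
  obtain ⟨q, hq, hqp⟩ := mem_closure_iff_seq_limit.1 hp
  choose φ hφ using fun n => exists_affineMap_of_mem_expFam (hq n)
  have hlim : ∀ i, Tendsto (fun n => Real.exp (φ n fun j => A j i)) atTop (𝓝 (p i)) :=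
    fun i => by simpa only [hφ] using tendsto_pi_nhds.1 hqp i
  have hsupp : (Function.support p).Nonempty := by
    have hsum := (closure_minimal expFam_subset_stdSimplex (isClosed_stdSimplex ℝ I) hp).2
    refine Function.support_nonempty_iff.2 fun h => ?_
    simp [h] at hsum
  have hdisj := disjoint_convexHull_affineSpan_of_tendsto (l := atTop) (θ := φ)
    (v := fun i j => A j i) (s := Function.support p)
    (fun i hi => ⟨_, by simpa using (hlim i).log hi⟩)
    (fun i hi => Real.tendsto_exp_comp_nhds_zero.1 <| by
      simpa only [Function.notMem_support.1 hi] using hlim i)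
  obtain ⟨f, hf⟩ := exists_strongDual_mem_iff_forall_le hsupp hdisj
  set g := (dotProductEquiv ℝ J).symm f.toLinearMap
  have hfg : ∀ x, f x = g ⬝ᵥ x := fun x => by
    rw [← dotProductEquiv_apply_apply, LinearEquiv.apply_symm_apply]; rfl
  simp only [hfg] at hf
  exact ⟨g, hf⟩

/-- If `p` lies in the topological closure (pointwise convergence) of the
discrete exponential family `E_A`, then the support of `p` is a facial set of
`P_A = conv{f_i}`, i.e. it is the set of maximizers of some linear functional `g`
over the columns `f_i`. -/
theorem support_facial_of_mem_closure {I J : Type} [Fintype I] [Fintype J] [Nonempty I]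
    (A : J → I → ℝ) (p : I → ℝ) (hp : p ∈ closure (expFam A)) :
    ∃ g : J → ℝ, ∀ i, p i ≠ 0 ↔ ∀ i', ∑ j, g j * A j i' ≤ ∑ j, g j * A j i :=
  support_facial_of_mem_closure_general A p hp
end

section
/- If F ⊆ I is a facial set of P_A, then there exists a probability distribution p in the closure of E_A with support exactly F; in fact, letting g define the face (⟨g,f_i⟩ ≥ c with equality exactly on F), the distributions p_{−s·g} converge as s → ∞ to the uniform distribution on F. -/
/-! Writing `T i = ⟨g, f_i⟩`, the distribution `p_{-s·g}` is the Gibbs distribution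
`exp (-s T i) / Z`. After dividing numerator and denominator by `exp (-s c)`, every weight
`exp (-s (T i - c))` tends to `1` on the face `F` and to `0` off it, so the distribution
tends to the uniform distribution on `F`; each `p_{-s·g}` lies in `E_A`, so the limit lies in its closure. -/

open Filter

open Topology Finset

lemma tendsto_exp_neg_mul_atTop {d : ℝ} (hd : 0 ≤ d) :
    Tendsto (fun s : ℝ => Real.exp (-s * d)) atTop (𝓝 (if d = 0 then 1 else 0)) := by
  rcases hd.eq_or_lt with rfl | hd
  · simp
  · rw [if_neg hd.ne']
    have hlin : Tendsto (fun s : ℝ => -s * d) atTop atBot := by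
      simpa only [neg_mul, Function.comp_def, id] using
        tendsto_neg_atTop_atBot.comp (tendsto_id.atTop_mul_const hd)
    exact Real.tendsto_exp_atBot.comp hlin

lemma exp_sub_log_sum_exp {I : Type*} [Fintype I] (x : I → ℝ) (c : ℝ) (i : I) :
    Real.exp (x i - Real.log (∑ i', Real.exp (x i'))) =
      Real.exp (x i - c) / ∑ i', Real.exp (x i' - c) := by
  have hpos : 0 < ∑ i', Real.exp (x i') :=
    sum_pos (fun i' _ => Real.exp_pos _) ⟨i, mem_univ i⟩
  simp only [Real.exp_sub, Real.exp_log hpos, ← sum_div]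
  rw [div_div_div_cancel_right₀ (Real.exp_ne_zero c)]

theorem tendsto_gibbs_uniform_on_argmin {I : Type*} [Fintype I] [DecidableEq I]
    (T : I → ℝ) (F : Finset I) (c : ℝ) (hvalid : ∀ i, c ≤ T i)
    (hface : ∀ i, T i = c ↔ i ∈ F) (hne : F.Nonempty) :
    Tendsto (fun s : ℝ => fun i => Real.exp (-s * T i - Real.log (∑ i', Real.exp (-s * T i'))))
      atTop (𝓝 (fun i => if i ∈ F then (F.card : ℝ)⁻¹ else 0)) := by
  have hweight : ∀ i, Tendsto (fun s : ℝ => Real.exp (-s * (T i - c))) atTop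
      (𝓝 (if i ∈ F then 1 else 0)) := by
    intro i
    simpa only [sub_eq_zero, hface] using tendsto_exp_neg_mul_atTop (sub_nonneg.mpr (hvalid i))
  have hpartition : Tendsto (fun s : ℝ => ∑ i', Real.exp (-s * (T i' - c))) atTop
      (𝓝 (F.card : ℝ)) := by
    simpa using tendsto_finsetSum univ fun i _ => hweight i
  have hcard : (F.card : ℝ) ≠ 0 := by exact_mod_cast hne.card_pos.ne'
  rw [tendsto_pi_nhds]
  intro i
  have hshift : ∀ s : ℝ, Real.exp (-s * T i - Real.log (∑ i', Real.exp (-s * T i'))) =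
      Real.exp (-s * (T i - c)) / ∑ i', Real.exp (-s * (T i' - c)) := by
    intro s
    have hfactor : ∀ t, -s * t - -s * c = -s * (t - c) := fun t => by ring
    rw [exp_sub_log_sum_exp (fun i => -s * T i) (-s * c)]
    simp only [hfactor]
  have hvalue :
      (if i ∈ F then (1 : ℝ) else 0) / F.card = if i ∈ F then (F.card : ℝ)⁻¹ else 0 := by
    split_ifs <;> simp
  rw [← hvalue]
  exact ((hweight i).div hpartition hcard).congr fun s => (hshift s).symm

theorem tendsto_uniform_on_facial_general {I J : Type} [Fintype I] [Fintype J] [DecidableEq I]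
    (A : J → I → ℝ) (F : Finset I) (g : J → ℝ) (c : ℝ)
    (hvalid : ∀ i, c ≤ ∑ j, g j * A j i)
    (hface : ∀ i, (∑ j, g j * A j i = c) ↔ i ∈ F)
    (hne : F.Nonempty) :
    Tendsto (fun s : ℝ => fun i : I =>
        Real.exp (∑ j, (-s * g j) * A j i -
          Real.log (∑ i', Real.exp (∑ j, (-s * g j) * A j i'))))
      atTop (nhds (fun i : I => if i ∈ F then (F.card : ℝ)⁻¹ else 0)) ∧
    (fun i : I => if i ∈ F then (F.card : ℝ)⁻¹ else 0) ∈ closure (expFam A) ∧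
    (∀ i, (if i ∈ F then (F.card : ℝ)⁻¹ else 0) ≠ 0 ↔ i ∈ F) := by
  have hpair : ∀ (s : ℝ) (i : I), ∑ j, (-s * g j) * A j i = -s * ∑ j, g j * A j i := by
    intro s i
    simp only [mul_sum, mul_assoc]
  have htend := tendsto_gibbs_uniform_on_argmin _ F c hvalid hface hne
  simp only [← hpair] at htend
  refine ⟨htend, mem_closure_of_tendsto htend (.of_forall fun s => ⟨fun j => -s * g j, rfl⟩),
    fun i => ?_⟩
  have hcard : (F.card : ℝ) ≠ 0 := by exact_mod_cast hne.card_pos.ne'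
  split_ifs with h <;> simp [h, hcard]

/-- If `F ⊆ I` is a facial set of `P_A`, defined by `g, c` with
`⟨g, f_i⟩ ≥ c` for all `i` and equality exactly on `F`, then the distributions
`p_{−s·g}` converge, as `s → ∞`, to the uniform distribution on `F`; in particular
there is a distribution in the closure of `E_A` with support exactly `F`. -/
theorem tendsto_uniform_on_facial {I J : Type} [Fintype I] [Fintype J] [DecidableEq I]
    [Nonempty I] (A : J → I → ℝ) (F : Finset I) (g : J → ℝ) (c : ℝ)
    (hvalid : ∀ i, c ≤ ∑ j, g j * A j i)
    (hface : ∀ i, (∑ j, g j * A j i = c) ↔ i ∈ F)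
    (hne : F.Nonempty) :
    Tendsto (fun s : ℝ => fun i : I =>
        Real.exp (∑ j, (-s * g j) * A j i -
          Real.log (∑ i', Real.exp (∑ j, (-s * g j) * A j i'))))
      atTop (nhds (fun i : I => if i ∈ F then (F.card : ℝ)⁻¹ else 0)) ∧
    (fun i : I => if i ∈ F then (F.card : ℝ)⁻¹ else 0) ∈ closure (expFam A) ∧
    (∀ i, (if i ∈ F then (F.card : ℝ)⁻¹ else 0) ≠ 0 ↔ i ∈ F) :=
  tendsto_uniform_on_facial_general A F g c hvalid hface hne
end

section
/- The topological closure of a discrete exponential family E_A equals the finite union ⋃_F E_{F,A} over all facial sets F of the convex support polytope P_A, where E_{F,A} = { p_{F,θ} : θ ∈ ℝ^J } and p_{F,θ}(i) = exp(⟨θ,f_i⟩ − k_F(θ)) for i ∈ F, and 0 otherwise. -/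
/-!
Up to positive scaling, the members of `E_A` are the vectors `exp ∘ z` with `z` in the subspace
`L = range [A; 1]`. If `g ∈ L` vanishes on `F` and is negative off `F`, then `exp (z + n g)`
tends to the restriction of `exp z` to `F`; after normalization this is `p_{F,θ}`, and such a `g`
exists exactly when `F` is facial. Conversely, if `exp ∘ z_n → q`, then `z_n` converges on the
support `S` of `q` and tends to `-∞` off it. As `L` is finite-dimensional, `z_n` is a convergent
sequence in `L` plus an element of `L` vanishing on `S`, and the latter is negative off `S` for
large `n`: so `S` is facial and `q` is `exp` of an element of `L` on `S`.
-/

open Filter Topology Finset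

theorem LinearMap.exists_comp_comp_eq_self {K E F : Type*} [DivisionRing K] [AddCommGroup E]
    [Module K E] [AddCommGroup F] [Module K F] (f : E →ₗ[K] F) :
    ∃ g : F →ₗ[K] E, f ∘ₗ g ∘ₗ f = f := by
  obtain ⟨r, hr⟩ := (LinearMap.range f).subtype.exists_leftInverse_of_injective
    (Submodule.ker_subtype _)
  obtain ⟨s, hs⟩ := f.rangeRestrict.exists_rightInverse_of_surjective f.range_rangeRestrict
  refine ⟨s ∘ₗ r, LinearMap.ext fun x => ?_⟩
  have hr' : r (f x) = f.rangeRestrict x := LinearMap.congr_fun hr (f.rangeRestrict x)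
  have hs' : f.rangeRestrict (s (f.rangeRestrict x)) = f.rangeRestrict x :=
    LinearMap.congr_fun hs _
  simpa [hr'] using congrArg Subtype.val hs'

theorem LinearMap.exists_tendsto_of_tendsto_comp {𝕜 E F α : Type*} [NontriviallyNormedField 𝕜]
    [CompleteSpace 𝕜] [AddCommGroup E] [Module 𝕜 E] [TopologicalSpace E]
    [IsTopologicalAddGroup E] [ContinuousSMul 𝕜 E] [AddCommGroup F] [Module 𝕜 F]
    [TopologicalSpace F] [IsTopologicalAddGroup F] [ContinuousSMul 𝕜 F] [T2Space F]
    [FiniteDimensional 𝕜 F] {l : Filter α} [l.NeBot] (f : E →ₗ[𝕜] F) {x : α → E} {y : F}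
    (h : Tendsto (fun a => f (x a)) l (𝓝 y)) :
    ∃ c : α → E, ∃ c₀ : E, Tendsto c l (𝓝 c₀) ∧ f c₀ = y ∧ ∀ a, f (c a) = f (x a) := by
  obtain ⟨g, hg⟩ := f.exists_comp_comp_eq_self
  have hfgf : ∀ e, f (g (f e)) = f e := LinearMap.congr_fun hg
  obtain ⟨e, rfl⟩ : y ∈ LinearMap.range f :=
    (Submodule.closed_of_finiteDimensional _).mem_of_tendsto h
      (Eventually.of_forall fun a => LinearMap.mem_range_self f (x a))
  exact ⟨fun a => g (f (x a)), g (f e), (g.continuous_of_finiteDimensional.tendsto _).comp h,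
    hfgf e, fun a => hfgf (x a)⟩

theorem Submodule.exists_eq_and_exists_neg_of_tendsto {ι : Type*} [Finite ι]
    (L : Submodule ℝ (ι → ℝ)) (S : Set ι) {z : ℕ → ι → ℝ} (hz : ∀ n, z n ∈ L) {v : ι → ℝ}
    (hS : ∀ i ∈ S, Tendsto (fun n => z n i) atTop (𝓝 (v i)))
    (hSc : ∀ i ∉ S, Tendsto (fun n => z n i) atTop atBot) :
    (∃ w ∈ L, ∀ i ∈ S, w i = v i) ∧ ∃ g ∈ L, (∀ i ∈ S, g i = 0) ∧ ∀ i ∉ S, g i < 0 := by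
  let φ : L →ₗ[ℝ] S → ℝ := LinearMap.funLeft ℝ ℝ ((↑) : S → ι) ∘ₗ L.subtype
  have hφ : Tendsto (fun n => φ ⟨z n, hz n⟩) atTop (𝓝 fun i : S => v i) :=
    tendsto_pi_nhds.2 fun i => hS i i.2
  obtain ⟨c, c₀, hc, hc₀, hcz⟩ := φ.exists_tendsto_of_tendsto_comp hφ
  refine ⟨⟨c₀, c₀.2, fun i hi => congrFun hc₀ ⟨i, hi⟩⟩, ?_⟩
  have hcS : ∀ n, ∀ i ∈ S, (c n : ι → ℝ) i = z n i := fun n i hi => congrFun (hcz n) ⟨i, hi⟩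
  have hci : ∀ i, Tendsto (fun n => (c n : ι → ℝ) i) atTop (𝓝 ((c₀ : ι → ℝ) i)) := fun i =>
    ((continuous_apply i).comp continuous_subtype_val).continuousAt.tendsto.comp hc
  have hneg : ∀ᶠ n in atTop, ∀ i ∉ S, z n i - (c n : ι → ℝ) i < 0 := by
    refine eventually_all.2 fun i => ?_
    by_cases hi : i ∈ S
    · exact Eventually.of_forall fun _ h => absurd hi h
    · exact ((hSc i hi).atBot_add (hci i).neg).eventually (eventually_lt_atBot 0) |>.mono
        fun n hn _ => by simpa [sub_eq_add_neg] using hn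
  obtain ⟨n, hn⟩ := hneg.exists
  exact ⟨z n - c n, L.sub_mem (hz n) (c n).2,
    fun i hi => by simp [hcS n i hi], hn⟩

theorem indicator_exp_mem_closure {ι : Type*} (L : Submodule ℝ (ι → ℝ)) {S : Set ι}
    {g w : ι → ℝ} (hg : g ∈ L) (hgS : ∀ i ∈ S, g i = 0) (hgSc : ∀ i ∉ S, g i < 0) (hw : w ∈ L) :
    S.indicator (fun i => Real.exp (w i)) ∈
      closure ((fun z i => Real.exp (z i)) '' (L : Set (ι → ℝ))) := by
  refine mem_closure_of_tendsto (b := atTop) (f := fun n : ℕ => fun i => Real.exp (w i + n * g i))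
    (tendsto_pi_nhds.2 fun i => ?_)
    (Eventually.of_forall fun n => ⟨w + (n : ℝ) • g, L.add_mem hw (L.smul_mem _ hg), rfl⟩)
  by_cases hi : i ∈ S
  · simp [hi, hgS i hi]
  · simpa [hi] using tendsto_atBot_add_const_left _ _
      (tendsto_natCast_atTop_atTop.atTop_mul_const_of_neg (hgSc i hi))

theorem exists_indicator_exp_of_mem_closure {ι : Type*} [Fintype ι] {L : Submodule ℝ (ι → ℝ)}
    {q : ι → ℝ} (hq : q ∈ closure ((fun z i => Real.exp (z i)) '' (L : Set (ι → ℝ)))) :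
    ∃ S : Finset ι, (∃ g ∈ L, (∀ i ∈ S, g i = 0) ∧ ∀ i ∉ S, g i < 0) ∧
      ∃ w ∈ L, q = (S : Set ι).indicator fun i => Real.exp (w i) := by
  classical
  obtain ⟨p, hpL, hp⟩ := mem_closure_iff_seq_limit.1 hq
  choose z hzL hzp using hpL
  have hzq : ∀ i, Tendsto (fun n => Real.exp (z n i)) atTop (𝓝 (q i)) := fun i =>
    (tendsto_pi_nhds.1 hp i).congr fun n => by rw [← hzp n]
  have hq0 : ∀ i, 0 ≤ q i := fun i => ge_of_tendsto' (hzq i) fun n => (Real.exp_pos _).le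
  set S := univ.filter (fun i => 0 < q i)
  have hqS : ∀ i, i ∉ S → q i = 0 := fun i hi =>
    le_antisymm (not_lt.1 fun h => hi (by simpa [S] using h)) (hq0 i)
  obtain ⟨⟨w, hwL, hw⟩, g, hgL, hgS, hgSc⟩ :=
    L.exists_eq_and_exists_neg_of_tendsto (S : Set ι) hzL (v := fun i => Real.log (q i))
      (fun i hi => by
        have hqi : 0 < q i := by simpa [S] using hi
        simpa [Function.comp_def] using
          (Real.continuousAt_log hqi.ne').tendsto.comp (hzq i))
      (fun i hi => Real.tendsto_exp_comp_nhds_zero.1 (by simpa [hqS i hi] using hzq i))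
  refine ⟨S, ⟨g, hgL, hgS, hgSc⟩, w, hwL, funext fun i => ?_⟩
  by_cases hi : i ∈ S
  · have hqi : 0 < q i := by simpa [S] using hi
    simp [hi, hw i hi, Real.exp_log hqi]
  · simp [hi, hqS i hi]

noncomputable def normalizeMass {ι : Type*} [Fintype ι] (w : ι → ℝ) : ι → ℝ :=
  (∑ i, w i)⁻¹ • w

section normalizeMass

variable {ι : Type*} [Fintype ι]

theorem sum_normalizeMass {w : ι → ℝ} (hw : ∑ i, w i ≠ 0) : ∑ i, normalizeMass w i = 1 := by
  simp [normalizeMass, ← Finset.mul_sum, hw]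

theorem normalizeMass_smul {c : ℝ} (hc : c ≠ 0) (w : ι → ℝ) :
    normalizeMass (c • w) = normalizeMass w := by
  simp [normalizeMass, ← Finset.mul_sum, smul_smul, mul_comm, hc]

theorem normalizeMass_of_sum_eq_one {w : ι → ℝ} (hw : ∑ i, w i = 1) : normalizeMass w = w := by
  simp [normalizeMass, hw]

theorem continuousAt_normalizeMass {w : ι → ℝ} (hw : ∑ i, w i ≠ 0) :
    ContinuousAt normalizeMass w :=
  ((continuous_finsetSum _ fun i _ => continuous_apply i).continuousAt.inv₀ hw).smul
    continuousAt_id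

end normalizeMass

section ExponentialFamily

variable {I J : Type} [Fintype J] (A : J → I → ℝ)

/-- `A` with a row of ones appended: its range contains the logarithms of all positive multiples
of members of `E_A`. -/
noncomputable def logLinearMap : (J → ℝ) × ℝ →ₗ[ℝ] I → ℝ :=
  (Matrix.vecMulLinear A).coprod (LinearMap.toSpanSingleton ℝ _ 1)

theorem logLinearMap_apply (x : (J → ℝ) × ℝ) (i : I) :
    logLinearMap A x i = ∑ j, x.1 j * A j i + x.2 := by
  simp [logLinearMap]
  rfl

variable [Fintype I]

theorem expFam_subset_image_exp :
    expFam A ⊆ (fun z i => Real.exp (z i)) '' (LinearMap.range (logLinearMap A) : Set (I → ℝ)) := by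
  rintro _ ⟨θ, rfl⟩
  exact ⟨_, LinearMap.mem_range_self _ (θ, -Real.log (∑ i, Real.exp (∑ j, θ j * A j i))),
    by simp [logLinearMap_apply, sub_eq_add_neg]⟩

theorem expFam_eq_range [Nonempty I] :
    expFam A = Set.range fun θ : J → ℝ => normalizeMass fun i => Real.exp (∑ j, θ j * A j i) := by
  refine congrArg _ (funext fun q => propext (exists_congr fun θ => ?_))
  have hZ : 0 < ∑ i, Real.exp (∑ j, θ j * A j i) :=
    sum_pos (fun i _ => Real.exp_pos _) univ_nonempty
  simp [normalizeMass, Real.exp_sub, Real.exp_log hZ, div_eq_inv_mul, funext_iff, eq_comm]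

theorem sum_eq_one_of_mem_closure_expFam [Nonempty I] {q : I → ℝ} (hq : q ∈ closure (expFam A)) :
    ∑ i, q i = 1 := by
  refine closure_minimal (fun p hp => ?_)
    (isClosed_eq (continuous_finsetSum _ fun i _ => continuous_apply i) continuous_const) hq
  rw [expFam_eq_range] at hp
  obtain ⟨θ, rfl⟩ := hp
  exact sum_normalizeMass (sum_pos (fun i _ => Real.exp_pos _) univ_nonempty).ne'

theorem normalizeMass_exp_logLinearMap_mem_expFam [Nonempty I] (x : (J → ℝ) × ℝ) :
    normalizeMass (fun i => Real.exp (logLinearMap A x i)) ∈ expFam A := by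
  have h : (fun i => Real.exp (logLinearMap A x i)) =
      Real.exp x.2 • fun i => Real.exp (∑ j, x.1 j * A j i) := by
    ext i
    simp [logLinearMap_apply, Real.exp_add, mul_comm]
  rw [expFam_eq_range, h, normalizeMass_smul (Real.exp_pos _).ne']
  exact ⟨x.1, rfl⟩

theorem FacialF.nonempty [Nonempty I] {F : Finset I} (hF : FacialF A F) : F.Nonempty := by
  obtain ⟨g, hg⟩ := hF
  obtain ⟨i₀, -, hi₀⟩ := exists_max_image univ (fun i => ∑ j, g j * A j i) univ_nonempty
  exact ⟨i₀, (hg i₀).2 fun i => hi₀ i (mem_univ i)⟩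

theorem FacialF.exists_logLinearMap [Nonempty I] {F : Finset I} (hF : FacialF A F) :
    ∃ x, (∀ i ∈ F, logLinearMap A x i = 0) ∧ ∀ i ∉ F, logLinearMap A x i < 0 := by
  obtain ⟨g, hg⟩ := hF
  obtain ⟨i₀, -, hi₀⟩ := exists_max_image univ (fun i => ∑ j, g j * A j i) univ_nonempty
  refine ⟨(g, -∑ j, g j * A j i₀), fun i hi => ?_, fun i hi => ?_⟩
  · simp [logLinearMap_apply, le_antisymm (hi₀ i (mem_univ i)) ((hg i).1 hi i₀)]
  · have hlt : ∑ j, g j * A j i < ∑ j, g j * A j i₀ :=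
      (hi₀ i (mem_univ i)).lt_of_ne fun h => hi ((hg i).2 fun i' => h ▸ hi₀ i' (mem_univ i'))
    simpa [logLinearMap_apply, ← sub_eq_add_neg] using hlt

theorem facialF_of_logLinearMap {F : Finset I} (hF : F.Nonempty) (x : (J → ℝ) × ℝ)
    (hxF : ∀ i ∈ F, logLinearMap A x i = 0) (hxFc : ∀ i ∉ F, logLinearMap A x i < 0) :
    FacialF A F := by
  have hle : ∀ i, logLinearMap A x i ≤ 0 := fun i => by
    by_cases hi : i ∈ F
    exacts [(hxF i hi).le, (hxFc i hi).le]
  obtain ⟨i₀, hi₀⟩ := hF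
  refine ⟨x.1, fun i => ⟨fun hi i' => ?_, fun h => ?_⟩⟩
  · linarith [hle i', hxF i hi, logLinearMap_apply A x i, logLinearMap_apply A x i']
  · by_contra hi
    linarith [h i₀, hxF i₀ hi₀, hxFc i hi, logLinearMap_apply A x i, logLinearMap_apply A x i₀]

variable [DecidableEq I]

theorem ptrunc_eq_normalizeMass (F : Finset I) (θ : J → ℝ) :
    ptrunc A F θ = normalizeMass ((F : Set I).indicator fun i => Real.exp (∑ j, θ j * A j i)) := by
  ext i
  by_cases hi : i ∈ F
  · have hZ : 0 < ∑ i ∈ F, Real.exp (∑ j, θ j * A j i) :=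
      sum_pos (fun i _ => Real.exp_pos _) ⟨i, hi⟩
    simp [ptrunc, normalizeMass, hi, Real.exp_sub, Real.exp_log hZ, div_eq_inv_mul,
      Finset.sum_indicator_subset _ (subset_univ F)]
  · simp [ptrunc, normalizeMass, hi]

theorem ptrunc_mem_closure_expFam [Nonempty I] {F : Finset I} (hF : FacialF A F) (θ : J → ℝ) :
    ptrunc A F θ ∈ closure (expFam A) := by
  obtain ⟨x, hxF, hxFc⟩ := hF.exists_logLinearMap
  have hlim := indicator_exp_mem_closure (LinearMap.range (logLinearMap A))
    (LinearMap.mem_range_self _ x) hxF hxFc (LinearMap.mem_range_self _ (θ, 0))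
  have hsum : ∑ i, (F : Set I).indicator (fun i => Real.exp (logLinearMap A (θ, 0) i)) i ≠ 0 := by
    rw [Finset.sum_indicator_subset _ (subset_univ F)]
    exact (sum_pos (fun i _ => Real.exp_pos _) hF.nonempty).ne'
  have hnorm := mem_closure_image (continuousAt_normalizeMass hsum) hlim
  rw [← Set.image_comp] at hnorm
  refine closure_mono ?_ (by simpa [ptrunc_eq_normalizeMass, logLinearMap_apply] using hnorm)
  rintro _ ⟨_, ⟨x, rfl⟩, rfl⟩
  exact normalizeMass_exp_logLinearMap_mem_expFam A x

theorem indicator_exp_logLinearMap_eq_ptrunc {F : Finset I} (x : (J → ℝ) × ℝ)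
    (hsum : ∑ i, (F : Set I).indicator (fun i => Real.exp (logLinearMap A x i)) i = 1) :
    (F : Set I).indicator (fun i => Real.exp (logLinearMap A x i)) = ptrunc A F x.1 := by
  have h : (F : Set I).indicator (fun i => Real.exp (logLinearMap A x i)) =
      Real.exp x.2 • (F : Set I).indicator fun i => Real.exp (∑ j, x.1 j * A j i) := by
    ext i
    by_cases hi : i ∈ F <;> simp [hi, logLinearMap_apply, Real.exp_add, mul_comm]
  rw [ptrunc_eq_normalizeMass, ← normalizeMass_smul (Real.exp_pos x.2).ne', ← h,
    normalizeMass_of_sum_eq_one hsum]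

end ExponentialFamily

/-- The topological closure of the discrete exponential family `E_A` equals
the union `⋃_F E_{F,A}` over all facial sets `F` of the convex support polytope `P_A`. -/
theorem closure_expFam_eq_union {I J : Type} [Fintype I] [Fintype J] [DecidableEq I]
    [Nonempty I] (A : J → I → ℝ) :
    closure (expFam A) =
      {q : I → ℝ | ∃ F : Finset I, FacialF A F ∧ ∃ θ : J → ℝ, q = ptrunc A F θ} := by
  ext q
  refine ⟨fun hq => ?_, ?_⟩
  · obtain ⟨F, ⟨_, ⟨y, rfl⟩, hyF, hyFc⟩, _, ⟨x, rfl⟩, rfl⟩ :=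
      exists_indicator_exp_of_mem_closure (closure_mono (expFam_subset_image_exp A) hq)
    have hsum := sum_eq_one_of_mem_closure_expFam A hq
    have hF : F.Nonempty := by
      by_contra hF
      simp [Finset.not_nonempty_iff_eq_empty.1 hF] at hsum
    exact ⟨F, facialF_of_logLinearMap A hF y hyF hyFc, x.1,
      indicator_exp_logLinearMap_eq_ptrunc A x hsum⟩
  · rintro ⟨F, hF, θ, rfl⟩
    exact ptrunc_mem_closure_expFam A hF θ
end

section
/- If p ∈ closure(E_A) and F = supp(p), then p itself belongs to the exponential family E_{A_F} on F, where A_F is the submatrix of A with columns indexed by F; that is, the restriction of log p to F is orthogonal to the kernel of the map determined by Ã_F. -/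
/-- If `p ∈ closure(E_A)` and `F = supp(p)`, then `p` belongs to the
exponential family on `F` generated by the columns `{f_i : i ∈ F}`: the restriction of
`log p` to `F` is orthogonal to the kernel of `Ã_F`, i.e. `⟨log p, v⟩ = 0` for every
`v` supported on `F` with `A v = 0` and `∑ i, v i = 0`. -/
theorem mem_truncated_family_of_mem_closure {I J : Type} [Fintype I] [Fintype J]
    [Nonempty I] (A : J → I → ℝ) (p : I → ℝ) (hp : p ∈ closure (expFam A)) :
    ∀ v : I → ℝ, (∀ i, p i = 0 → v i = 0) →
      (∀ j, ∑ i, A j i * v i = 0) → (∑ i, v i = 0) →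
      ∑ i, Real.log (p i) * v i = 0 := by
  intro v hv hA hs
  set g : (I → ℝ) → ℝ := fun q => ∑ i, Real.log (q i) * v i with hg
  have hcont : ContinuousAt g p := by
    apply tendsto_finset_sum
    intro i _
    by_cases hvi : v i = 0
    · simp only [hvi, mul_zero]
      exact continuousAt_const
    · have hpi : p i ≠ 0 := fun h => hvi (hv i h)
      have h2 : ContinuousAt (fun q : I → ℝ => Real.log (q i) * v i) p := by
        have he : ContinuousAt (fun q : I → ℝ => q i) p := (continuous_apply i).continuousAt
        exact (he.log hpi).mul continuousAt_const
      exact h2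
  have hzero : ∀ q ∈ expFam A, g q = 0 := by
    rintro q ⟨θ, rfl⟩
    simp only [hg, Real.log_exp]
    simp only [sub_mul, Finset.sum_sub_distrib]
    have h1 : ∑ i, (∑ j, θ j * A j i) * v i = 0 := by
      simp_rw [Finset.sum_mul]
      rw [Finset.sum_comm]
      simp_rw [mul_assoc, ← Finset.mul_sum]
      simp [hA]
    rw [h1, ← Finset.mul_sum, hs, mul_zero, sub_zero]
  have hmem : g p ∈ closure (g '' expFam A) := mem_closure_image hcont hp
  have hsub : g '' expFam A ⊆ {0} := by
    rintro x ⟨q, hq, rfl⟩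
    exact hzero q hq
  have : g p ∈ closure ({0} : Set ℝ) := closure_mono hsub hmem
  simpa using this
end

section
/- Let Δ be a simplicial complex on V that is reducible with components Δ|_{V₁}, Δ|_{V₂} (so V₁ ∪ V₂ = V, S = V₁ ∩ V₂ is complete in Δ, and Δ = Δ|_{V₁} ∪ Δ|_{V₂}). If F ⊆ I is a facial set of the marginal polytope of Δ, then the projections π_{V₁}(F) and π_{V₂}(F) are facial sets of the marginal polytopes of Δ|_{V₁} and Δ|_{V₂}, respectively. -/
/-- The pairing `⟨g, f_i⟩` between a functional `g` (indexed by rows `(D, x)` of the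
design matrix of the hierarchical model of `Δ`) and the design-matrix column `f_i` of a
cell `i`: the entry of `f_i` at row `(D, x)` is `1` iff `D ∈ Δ` and `i` agrees with `x`
on `D`. -/
def hdot {V : Type} [Fintype V] [DecidableEq V] {ι : V → Type} [∀ v, Fintype (ι v)]
    [∀ v, DecidableEq (ι v)] (Δ : Finset (Finset V))
    (g : Finset V × (∀ v, ι v) → ℝ) (i : ∀ v, ι v) : ℝ :=
  ∑ p : Finset V × (∀ v, ι v),
    g p * (if p.1 ∈ Δ ∧ ∀ v ∈ p.1, i v = p.2 v then 1 else 0)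

/-- `F` is a facial set of the marginal polytope of `Δ`: there is a valid inequality
`⟨g, f_i⟩ ≥ c` whose contact set is exactly `F`. -/
def HFacial {V : Type} [Fintype V] [DecidableEq V] {ι : V → Type} [∀ v, Fintype (ι v)]
    [∀ v, DecidableEq (ι v)] (Δ : Finset (Finset V)) (F : Set (∀ v, ι v)) : Prop :=
  ∃ (g : Finset V × (∀ v, ι v) → ℝ) (c : ℝ),
    (∀ i, c ≤ hdot Δ g i) ∧ ∀ i, i ∈ F ↔ hdot Δ g i = c

/-- The induced subcomplex `Δ|_{V'}`, as a simplicial complex on the vertex set `V'`. -/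
def hinduced {V : Type} [DecidableEq V] (Δ : Finset (Finset V)) (V' : Finset V) :
    Finset (Finset {v // v ∈ V'}) :=
  (Δ.filter (· ⊆ V')).image (Finset.subtype (· ∈ V'))

/-- The coordinate projection `π_{V'} : I → I_{V'}`. -/
def hproj {V : Type} {ι : V → Type} (V' : Finset V) (i : ∀ v, ι v) :
    ∀ v' : {v // v ∈ V'}, ι v'.1 :=
  fun v' => i v'.1

/-!
Split `⟨g, f_i⟩ = A(π_{V₁} i) + B(i)`, where `A` collects the faces of `Δ` inside `V₁` and `B`
the remaining ones, which lie in `V₂`. Minimising a valid inequality `⟨g, f_i⟩ ≥ c` over the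
fibres of `π_{V₁}` gives `A(j) + M(j) ≥ c` on `I_{V₁}`, with `M(j)` the minimum of `B` over the
fibre of `j`; its contact set is `π_{V₁}(F)`. As `B` only sees the coordinates in `V₂`, `M` only
sees those in the separator `S = V₁ ∩ V₂`, and because `S` is a face of `Δ|_{V₁}`, both `A` and
`M` are linear combinations of the columns of the design matrix of `Δ|_{V₁}`.
-/

open Finset

section FiberInf

variable {α β : Type*} [Fintype α] [DecidableEq β] {p : α → β}

theorem filter_fiber_nonempty (hp : Function.Surjective p) (b : β) :
    (univ.filter (p · = b)).Nonempty :=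
  let ⟨a, ha⟩ := hp b
  ⟨a, by simpa using ha⟩

def fiberInf (p : α → β) (hp : Function.Surjective p) (φ : α → ℝ) (b : β) : ℝ :=
  (univ.filter (p · = b)).inf' (filter_fiber_nonempty hp b) φ

variable (hp : Function.Surjective p) (φ : α → ℝ)

theorem le_fiberInf_iff {b : β} {c : ℝ} :
    c ≤ fiberInf p hp φ b ↔ ∀ a, p a = b → c ≤ φ a := by
  simp [fiberInf]

theorem fiberInf_le (a : α) : fiberInf p hp φ (p a) ≤ φ a :=
  inf'_le φ (by simp)

theorem exists_eq_fiberInf (b : β) : ∃ a, p a = b ∧ φ a = fiberInf p hp φ b := by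
  obtain ⟨a, ha, he⟩ := exists_mem_eq_inf' (filter_fiber_nonempty hp b) φ
  exact ⟨a, by simpa using ha, he.symm⟩

theorem fiberInf_add_comp (f : β → ℝ) (b : β) :
    fiberInf p hp (fun a => f (p a) + φ a) b = f b + fiberInf p hp φ b := by
  rw [fiberInf, fiberInf, ← OrderIso.addLeft_apply, map_finset_inf']
  exact inf'_congr _ rfl fun a ha => by simp_all

theorem image_setOf_eq_setOf_fiberInf_eq {c : ℝ} (hc : ∀ a, c ≤ φ a) :
    p '' {a | φ a = c} = {b | fiberInf p hp φ b = c} := by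
  ext b
  constructor
  · rintro ⟨a, ha, rfl⟩
    exact le_antisymm (ha ▸ fiberInf_le hp φ a) ((le_fiberInf_iff hp φ).2 fun a _ => hc a)
  · intro hb
    obtain ⟨a, rfl, ha⟩ := exists_eq_fiberInf hp φ b
    exact ⟨a, ha.trans hb, rfl⟩

end FiberInf

section Restriction

variable {V : Type} [DecidableEq V] {ι : V → Type}

def hglue (V' : Finset V) (j : ∀ v' : {v // v ∈ V'}, ι v'.1) (i : ∀ v, ι v) : ∀ v, ι v :=
  fun v => if h : v ∈ V' then j ⟨v, h⟩ else i v

theorem hproj_hglue (V' : Finset V) (j : ∀ v' : {v // v ∈ V'}, ι v'.1) (i : ∀ v, ι v) :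
    hproj V' (hglue V' j i) = j :=
  funext fun v' => dif_pos v'.2

theorem hglue_of_notMem {V' : Finset V} (j : ∀ v' : {v // v ∈ V'}, ι v'.1) (i : ∀ v, ι v)
    {v : V} (hv : v ∉ V') : hglue V' j i v = i v :=
  dif_neg hv

theorem hproj_surjective (V' : Finset V) [Nonempty (∀ v, ι v)] :
    Function.Surjective (hproj (ι := ι) V') :=
  fun j => ⟨hglue V' j (Classical.arbitrary _), hproj_hglue V' j _⟩

theorem mem_hinduced_subtype_iff {Δ : Finset (Finset V)} {V' D : Finset V} (hD : D ⊆ V') :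
    D.subtype (· ∈ V') ∈ hinduced Δ V' ↔ D ∈ Δ := by
  refine ⟨fun h => ?_, fun h => mem_image.2 ⟨D, mem_filter.2 ⟨h, hD⟩, rfl⟩⟩
  obtain ⟨D', hD', hD'D⟩ := mem_image.1 h
  obtain ⟨hD'Δ, hD'V'⟩ := mem_filter.1 hD'
  rwa [← subtype_map_of_mem hD, ← hD'D, subtype_map_of_mem hD'V']

end Restriction

section Hdot

variable {V : Type} [Fintype V] [DecidableEq V] {ι : V → Type} [∀ v, Fintype (ι v)]
  [∀ v, DecidableEq (ι v)]

def hdotLinearMap (Δ : Finset (Finset V)) :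
    (Finset V × (∀ v, ι v) → ℝ) →ₗ[ℝ] ((∀ v, ι v) → ℝ) where
  toFun := hdot Δ
  map_add' g g' := funext fun i => by simp only [hdot, Pi.add_apply, add_mul, sum_add_distrib]
  map_smul' a g := funext fun i => by
    simp only [hdot, Pi.smul_apply, smul_eq_mul, mul_assoc, mul_sum, RingHom.id_apply]

@[simp]
theorem hdotLinearMap_apply (Δ : Finset (Finset V)) (g : Finset V × (∀ v, ι v) → ℝ) :
    hdotLinearMap Δ g = hdot Δ g :=
  rfl

theorem hdot_single (Δ : Finset (Finset V)) (q : Finset V × (∀ v, ι v)) (i : ∀ v, ι v) :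
    hdot Δ (Pi.single q 1) i = if q.1 ∈ Δ ∧ ∀ v ∈ q.1, i v = q.2 v then 1 else 0 := by
  rw [hdot, Fintype.sum_eq_single q fun p hp => by simp [hp]]
  simp

theorem hdot_congr (Δ : Finset (Finset V)) (g : Finset V × (∀ v, ι v) → ℝ) {i i' : ∀ v, ι v}
    (h : ∀ D ∈ Δ, ∀ v ∈ D, i v = i' v) : hdot Δ g i = hdot Δ g i' := by
  refine sum_congr rfl fun p _ => ?_
  grind

theorem hdot_filter_add_hdot_filter_not (Δ : Finset (Finset V)) (P : Finset V → Prop)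
    [DecidablePred P] (g : Finset V × (∀ v, ι v) → ℝ) (i : ∀ v, ι v) :
    hdot (Δ.filter P) g i + hdot (Δ.filter (¬ P ·)) g i = hdot Δ g i := by
  rw [hdot, hdot, hdot, ← sum_add_distrib]
  refine sum_congr rfl fun p _ => ?_
  by_cases hP : P p.1 <;> simp [hP]

theorem hfacial_empty (Δ : Finset (Finset V)) : HFacial Δ (∅ : Set (∀ v, ι v)) :=
  ⟨0, -1, fun i => by simp [hdot], fun i => by simp [hdot]⟩

theorem mem_range_hdotLinearMap_of_dependsOn {Δ : Finset (Finset V)} {E : Finset V} (hE : E ∈ Δ)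
    (ψ : (∀ v, ι v) → ℝ) (hψ : ∀ i i', (∀ v ∈ E, i v = i' v) → ψ i = ψ i') :
    ψ ∈ LinearMap.range (hdotLinearMap Δ) := by
  rcases isEmpty_or_nonempty (∀ v, ι v) with _ | ⟨⟨d⟩⟩
  · exact ⟨0, Subsingleton.elim _ _⟩
  -- only the row `(E, x)` with `x = i` on `E` and `x = d` off `E` sees the cell `i`
  refine ⟨fun p => if p.1 = E ∧ E.piecewise p.2 d = p.2 then ψ p.2 else 0, funext fun i => ?_⟩
  have hi : ∀ v ∈ E, i v = E.piecewise i d v := fun v hv => (piecewise_eq_of_mem _ _ _ hv).symm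
  rw [hdotLinearMap_apply, hdot, Fintype.sum_eq_single (E, E.piecewise i d)]
  · rw [if_pos ⟨rfl, piecewise_idem_left E i d d⟩, if_pos ⟨hE, hi⟩, mul_one]
    exact hψ _ _ fun v hv => (hi v hv).symm
  · rintro ⟨D, x⟩ hne
    dsimp only at hne ⊢
    split_ifs with hx hix <;> try simp
    obtain ⟨rfl, hx⟩ := hx
    exact (hne (Prod.ext rfl (hx.symm.trans
      (D.piecewise_congr (fun v hv => (hix.2 v hv).symm) fun _ _ => rfl)))).elim

theorem exists_hdot_hinduced_hproj_eq (Δ : Finset (Finset V)) (V' : Finset V)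
    (g : Finset V × (∀ v, ι v) → ℝ) :
    ∃ g', ∀ i, hdot (hinduced Δ V') g' (hproj V' i) = hdot (Δ.filter (· ⊆ V')) g i := by
  refine ⟨∑ p ∈ univ.filter (·.1 ⊆ V'), g p • Pi.single (p.1.subtype (· ∈ V'), hproj V' p.2) 1,
    fun i => ?_⟩
  rw [← hdotLinearMap_apply, map_sum, Finset.sum_apply, hdot, sum_filter]
  refine sum_congr rfl fun p _ => ?_
  by_cases hp : p.1 ⊆ V'
  · have hagree : (∀ v ∈ V', v ∈ p.1 → i v = p.2 v) ↔ ∀ v ∈ p.1, i v = p.2 v :=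
      ⟨fun h v hv => h v (hp hv) hv, fun h v _ hv => h v hv⟩
    simp [hdot_single, mem_hinduced_subtype_iff hp, hp, hproj, hagree]
  · simp [hp]

end Hdot

section Reducible

variable {V : Type} [Fintype V] [DecidableEq V] {ι : V → Type} [∀ v, Fintype (ι v)]
  [∀ v, DecidableEq (ι v)]

theorem fiberInf_hproj_le [Nonempty (∀ v, ι v)] {V₁ V₂ : Finset V} {φ : (∀ v, ι v) → ℝ}
    (hφ : ∀ i i', (∀ v ∈ V₂, i v = i' v) → φ i = φ i')
    {j j' : ∀ v' : {v // v ∈ V₁}, ι v'.1}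
    (hjj' : ∀ v ∈ (V₁ ∩ V₂).subtype (· ∈ V₁), j v = j' v) :
    fiberInf (hproj V₁) (hproj_surjective V₁) φ j ≤
      fiberInf (hproj V₁) (hproj_surjective V₁) φ j' := by
  rw [le_fiberInf_iff]
  rintro i rfl
  have hglue_eq : ∀ v ∈ V₂, hglue V₁ j i v = i v := by
    intro v hv
    by_cases hv₁ : v ∈ V₁
    · exact (dif_pos hv₁).trans (hjj' ⟨v, hv₁⟩ (mem_subtype.2 (mem_inter.2 ⟨hv₁, hv⟩)))
    · exact hglue_of_notMem j i hv₁
  calc fiberInf (hproj V₁) _ φ j = fiberInf (hproj V₁) _ φ (hproj V₁ (hglue V₁ j i)) := by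
        rw [hproj_hglue]
    _ ≤ φ (hglue V₁ j i) := fiberInf_le _ φ _
    _ = φ i := hφ _ _ hglue_eq

theorem fiberInf_hproj_hdot_mem_range [Nonempty (∀ v, ι v)] {Δ : Finset (Finset V)}
    {V₁ V₂ : Finset V} (hsub : ∀ D ∈ Δ, D ⊆ V₁ ∨ D ⊆ V₂) (hS : V₁ ∩ V₂ ∈ Δ)
    (g : Finset V × (∀ v, ι v) → ℝ) :
    fiberInf (hproj V₁) (hproj_surjective V₁) (hdot Δ g) ∈
      LinearMap.range (hdotLinearMap (hinduced Δ V₁)) := by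
  obtain ⟨gA, hgA⟩ := exists_hdot_hinduced_hproj_eq Δ V₁ g
  have hsplit : fiberInf (hproj V₁) (hproj_surjective V₁) (hdot Δ g) = hdot (hinduced Δ V₁) gA +
      fiberInf (hproj V₁) (hproj_surjective V₁) (hdot (Δ.filter (¬ · ⊆ V₁)) g) := by
    funext j
    rw [Pi.add_apply, ← fiberInf_add_comp]
    simp only [hgA, hdot_filter_add_hdot_filter_not]
  have hB : ∀ i i' : ∀ v, ι v, (∀ v ∈ V₂, i v = i' v) →
      hdot (Δ.filter (¬ · ⊆ V₁)) g i = hdot (Δ.filter (¬ · ⊆ V₁)) g i' := by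
    refine fun i i' h => hdot_congr _ g fun D hD v hv => h v ?_
    obtain ⟨hDΔ, hDV₁⟩ := mem_filter.1 hD
    exact ((hsub D hDΔ).resolve_left hDV₁) hv
  rw [hsplit]
  exact add_mem ⟨gA, rfl⟩ (mem_range_hdotLinearMap_of_dependsOn
    ((mem_hinduced_subtype_iff inter_subset_left).2 hS) _ fun j j' hjj' =>
      le_antisymm (fiberInf_hproj_le hB hjj') (fiberInf_hproj_le hB fun v hv => (hjj' v hv).symm))

theorem HFacial.image_hproj {Δ : Finset (Finset V)} {V₁ V₂ : Finset V}
    (hsub : ∀ D ∈ Δ, D ⊆ V₁ ∨ D ⊆ V₂) (hS : V₁ ∩ V₂ ∈ Δ) {F : Set (∀ v, ι v)} (hF : HFacial Δ F) :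
    HFacial (hinduced Δ V₁) (hproj V₁ '' F) := by
  rcases isEmpty_or_nonempty (∀ v, ι v) with _ | _
  · rw [Set.eq_empty_of_isEmpty F, Set.image_empty]
    exact hfacial_empty _
  obtain ⟨g, c, hc, hFg⟩ := hF
  obtain rfl : F = {i | hdot Δ g i = c} := Set.ext hFg
  obtain ⟨g', hg'⟩ := fiberInf_hproj_hdot_mem_range hsub hS g
  rw [hdotLinearMap_apply] at hg'
  refine ⟨g', c, fun j => ?_, fun j => ?_⟩
  · rw [hg', le_fiberInf_iff]
    exact fun i _ => hc i
  · rw [image_setOf_eq_setOf_fiberInf_eq (hproj_surjective V₁) _ hc, hg']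
    rfl

end Reducible

theorem facial_projections_of_reducible_general {V : Type} [Fintype V] [DecidableEq V]
    {ι : V → Type} [∀ v, Fintype (ι v)] [∀ v, DecidableEq (ι v)]
    (Δ : Finset (Finset V))
    (V₁ V₂ : Finset V)
    (hsplit : Δ = Δ.filter (· ⊆ V₁) ∪ Δ.filter (· ⊆ V₂))
    (hcomplete : V₁ ∩ V₂ ∈ Δ)
    (F : Set (∀ v, ι v)) (hF : HFacial Δ F) :
    HFacial (hinduced Δ V₁) (hproj V₁ '' F) ∧
    HFacial (hinduced Δ V₂) (hproj V₂ '' F) := by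
  have hsub : ∀ D ∈ Δ, D ⊆ V₁ ∨ D ⊆ V₂ := fun D hD => by
    rw [hsplit, mem_union, mem_filter, mem_filter] at hD
    exact hD.imp And.right And.right
  exact ⟨HFacial.image_hproj hsub hcomplete hF,
    HFacial.image_hproj (fun D hD => (hsub D hD).symm) (inter_comm V₁ V₂ ▸ hcomplete) hF⟩

/-- If `Δ` is reducible with components `Δ|_{V₁}`, `Δ|_{V₂}` (i.e.
`V₁ ∪ V₂ = V`, `Δ = Δ|_{V₁} ∪ Δ|_{V₂}`, and the separator `S = V₁ ∩ V₂` is complete in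
`Δ`), and `F` is a facial set of the marginal polytope of `Δ`, then `π_{V₁}(F)` and
`π_{V₂}(F)` are facial sets for `Δ|_{V₁}` and `Δ|_{V₂}` respectively. -/
theorem facial_projections_of_reducible {V : Type} [Fintype V] [DecidableEq V]
    {ι : V → Type} [∀ v, Fintype (ι v)] [∀ v, DecidableEq (ι v)]
    (Δ : Finset (Finset V)) (hΔ : ∀ D ∈ Δ, ∀ D' ⊆ D, D' ∈ Δ)
    (V₁ V₂ : Finset V) (hcover : V₁ ∪ V₂ = Finset.univ)
    (hsplit : Δ = Δ.filter (· ⊆ V₁) ∪ Δ.filter (· ⊆ V₂))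
    (hcomplete : V₁ ∩ V₂ ∈ Δ)
    (F : Set (∀ v, ι v)) (hF : HFacial Δ F) :
    HFacial (hinduced Δ V₁) (hproj V₁ '' F) ∧
    HFacial (hinduced Δ V₂) (hproj V₂ '' F) :=
  facial_projections_of_reducible_general Δ V₁ V₂ hsplit hcomplete F hF
end

section
/- For a decomposable simplicial complex Δ = Δ₁ ∪ ⋯ ∪ Δ_r, where each Δ_k is the complete simplex on a vertex subset V_k and (Δ₁ ∪ ⋯ ∪ Δ_k) ∩ Δ_{k+1} is a complete simplex, the smallest facial set containing any T ⊆ I is F_Δ(T) = ⋂_{k=1}^{r} π_{V_k}^{-1}(π_{V_k}(T)). -/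
open Finset
lemma key_min {V : Type} [Fintype V] [DecidableEq V]
    {ι : V → Type} [∀ v, Fintype (ι v)] [∀ v, DecidableEq (ι v)]
    (i : ∀ v, ι v) :
    ∀ (n : ℕ) (Vs : Fin n → Finset V) (H : Fin n → ((∀ v, ι v) → ℝ))
      (_hH : ∀ k x y, (∀ v ∈ Vs k, x v = y v) → H k x = H k y)
      (_hRIP : ∀ k : Fin n, 0 < k.1 → ∃ S : Finset V,
        ((Finset.univ.filter fun l : Fin n => l.1 < k.1).biUnion fun l => (Vs l).powerset) ∩
          (Vs k).powerset = S.powerset)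
      (c : ℝ) (_hc : ∀ x, c ≤ ∑ k, H k x)
      (_hattain : ∃ x, ∑ k, H k x = c)
      (t : Fin n → (∀ v, ι v))
      (_ht : ∀ k, ∑ j, H j (t k) = c)
      (_hti : ∀ k, ∀ v ∈ Vs k, t k v = i v),
      ∑ k, H k i = c := by
  intro n
  induction n with
  | zero =>
    intro Vs H hH hRIP c hc hattain t ht hti
    obtain ⟨x, hx⟩ := hattain
    simpa using hx
  | succ n IH =>
    intro Vs H hH hRIP c hc hattain t ht hti
    rcases Nat.eq_zero_or_pos n with hn | hn
    · subst hn
      have h0 := ht 0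
      have : H 0 i = H 0 (t 0) := (hH 0 (t 0) i (hti 0)).symm
      simpa [Fin.sum_univ_one, this] using h0
    · -- n ≥ 1 : eliminate the last block
      classical
      set lastk : Fin (n + 1) := Fin.last n with hlastk
      obtain ⟨S, hS⟩ := hRIP lastk (by simpa [lastk] using hn)
      -- S ⊆ Vs lastk
      have hSmem : S ∈ S.powerset := mem_powerset_self S
      rw [← hS] at hSmem
      have hSsub : S ⊆ Vs lastk := mem_powerset.mp (mem_inter.mp hSmem).2
      obtain ⟨l₀, hl₀mem, hSl₀⟩ := mem_biUnion.mp (mem_inter.mp hSmem).1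
      have hl₀lt : l₀.1 < n := by simpa [lastk] using (mem_filter.mp hl₀mem).2
      have hSl₀' : S ⊆ Vs l₀ := mem_powerset.mp hSl₀
      -- separator property
      have hsep : ∀ v ∈ Vs lastk, (∃ l : Fin (n+1), l.1 < n ∧ v ∈ Vs l) → v ∈ S := by
        intro v hv ⟨l, hl, hvl⟩
        have h1 : ({v} : Finset V) ∈
            ((Finset.univ.filter fun l : Fin (n+1) => l.1 < lastk.1).biUnion
              fun l => (Vs l).powerset) ∩ (Vs lastk).powerset := by
          rw [mem_inter]
          constructor
          · exact mem_biUnion.mpr ⟨l, mem_filter.mpr ⟨mem_univ _, by simpa [lastk] using hl⟩,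
              mem_powerset.mpr (singleton_subset_iff.mpr hvl)⟩
          · exact mem_powerset.mpr (singleton_subset_iff.mpr hv)
        rw [hS] at h1
        exact singleton_subset_iff.mp (mem_powerset.mp h1)
      -- the union of the first n blocks
      set W : Finset V := (Finset.univ.filter fun l : Fin (n+1) => l.1 < n).biUnion Vs with hW
      have hVkW : ∀ k : Fin (n+1), k.1 < n → Vs k ⊆ W := by
        intro k hk v hv
        exact mem_biUnion.mpr ⟨k, mem_filter.mpr ⟨mem_univ _, hk⟩, hv⟩
      -- patching
      set patch : (∀ v, ι v) → (∀ v, ι v) → (∀ v, ι v) :=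
        fun x z v => if v ∈ Vs lastk \ W then z v else x v with hpatch
      have P1 : ∀ x z (k : Fin (n+1)), k.1 < n → H k (patch x z) = H k x := by
        intro x z k hk
        apply hH
        intro v hv
        have hvW : v ∈ W := hVkW k hk hv
        simp [hpatch, mem_sdiff, hvW]
      have P2 : ∀ x z, (∀ v ∈ S, z v = x v) → H lastk (patch x z) = H lastk z := by
        intro x z hz
        apply hH
        intro v hv
        by_cases hvW : v ∈ W
        · have hvS : v ∈ S := by
            apply hsep v hv
            obtain ⟨l, hl, hvl⟩ := mem_biUnion.mp hvW
            exact ⟨l, (mem_filter.mp hl).2, hvl⟩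
          simp [hpatch, mem_sdiff, hvW, hz v hvS]
        · simp [hpatch, mem_sdiff, hv, hvW]
      -- elimination function m
      set m : (∀ v, ι v) → ℝ :=
        fun x => sInf (H lastk '' {z | ∀ v ∈ S, z v = x v}) with hm
      have hmemx : ∀ x : ∀ v, ι v, H lastk x ∈ H lastk '' {z | ∀ v ∈ S, z v = x v} :=
        fun x => ⟨x, fun v _ => rfl, rfl⟩
      have mle : ∀ x, m x ≤ H lastk x := by
        intro x
        exact csInf_le (Set.Finite.bddBelow (Set.toFinite _)) (hmemx x)
      have mex : ∀ x, ∃ z, (∀ v ∈ S, z v = x v) ∧ H lastk z = m x := by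
        intro x
        have := (Set.Nonempty.csInf_mem ⟨H lastk x, hmemx x⟩ (Set.toFinite _))
        obtain ⟨z, hz, hz2⟩ := this
        exact ⟨z, hz, hz2⟩
      have mdep : ∀ x y, (∀ v ∈ S, x v = y v) → m x = m y := by
        intro x y hxy
        have hset : {z : ∀ v, ι v | ∀ v ∈ S, z v = x v} = {z | ∀ v ∈ S, z v = y v} := by
          ext z
          constructor <;> intro h v hv
          · rw [h v hv, hxy v hv]
          · rw [h v hv, ← hxy v hv]
        simp only [hm]
        rw [hset]
      -- reduced system
      have hl₀cast : l₀ = Fin.castSucc ⟨l₀.1, hl₀lt⟩ := by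
        apply Fin.ext; simp
      set l₀' : Fin n := ⟨l₀.1, hl₀lt⟩ with hl₀'
      set H' : Fin n → ((∀ v, ι v) → ℝ) :=
        fun k x => H k.castSucc x + (if k = l₀' then m x else 0) with hH'def
      have hsum' : ∀ x, ∑ k : Fin n, H' k x = (∑ k : Fin n, H (Fin.castSucc k) x) + m x := by
        intro x
        rw [Finset.sum_add_distrib]
        congr 1
        simp
      have castlt : ∀ k : Fin n, (Fin.castSucc k).1 < n := by
        intro k; simpa using k.isLt
      -- c ≤ reduced sum
      have hc' : ∀ x, c ≤ ∑ k : Fin n, H' k x := by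
        intro x
        obtain ⟨z, hz1, hz2⟩ := mex x
        have h1 := hc (patch x z)
        rw [Fin.sum_univ_castSucc] at h1
        have h2 : ∀ k : Fin n, H (Fin.castSucc k) (patch x z) = H (Fin.castSucc k) x :=
          fun k => P1 x z _ (castlt k)
        rw [Finset.sum_congr rfl (fun k _ => h2 k), P2 x z hz1, hz2] at h1
        rw [hsum' x]
        exact h1
      -- reduced optima at t'
      have ht'aux : ∀ k : Fin (n+1), ∑ j : Fin n, H' j (t k) = c := by
        intro k
        have h1 := ht k
        rw [Fin.sum_univ_castSucc] at h1
        have h2 : ∑ j : Fin n, H' j (t k) ≤ c := by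
          rw [hsum']
          have := mle (t k)
          linarith
        exact le_antisymm h2 (hc' (t k))
      -- apply IH
      have hred := IH (fun k => Vs k.castSucc) H'
        (by
          intro k x y hxy
          simp only [hH'def]
          congr 1
          · exact hH k.castSucc x y hxy
          · by_cases hk : k = l₀'
            · simp only [hk, if_true]
              apply mdep
              intro v hv
              apply hxy
              subst hk
              show v ∈ Vs (Fin.castSucc l₀')
              rw [← hl₀cast]
              exact hSl₀' hv
            · simp [hk])
        (by
          intro k hk
          obtain ⟨S', hS'⟩ := hRIP k.castSucc (by simpa using hk)
          refine ⟨S', ?_⟩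
          rw [← hS']
          congr 1
          ext x
          simp only [mem_biUnion, mem_filter, mem_univ, true_and]
          constructor
          · rintro ⟨l, hl, hx⟩
            exact ⟨l.castSucc, by simpa using hl, hx⟩
          · rintro ⟨l, hl, hx⟩
            have hln : l.1 < n := lt_of_lt_of_le hl (by simpa using Nat.le_of_lt_succ k.castSucc.isLt)
            refine ⟨⟨l.1, hln⟩, by simpa using hl, ?_⟩
            have : Fin.castSucc ⟨l.1, hln⟩ = l := by apply Fin.ext; simp
            rw [this]
            exact hx)
        c hc'
        ⟨t 0, ht'aux 0⟩
        (fun k => t k.castSucc)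
        (fun k => ht'aux k.castSucc)
        (fun k => hti k.castSucc)
      -- H lastk i = m i
      have hmt : m (t lastk) = H lastk (t lastk) := by
        refine le_antisymm (mle _) ?_
        obtain ⟨z, hz1, hz2⟩ := mex (t lastk)
        have h1 := hc (patch (t lastk) z)
        rw [Fin.sum_univ_castSucc] at h1
        have h2 : ∀ k : Fin n, H (Fin.castSucc k) (patch (t lastk) z) =
            H (Fin.castSucc k) (t lastk) := fun k => P1 _ z _ (castlt k)
        rw [Finset.sum_congr rfl (fun k _ => h2 k), P2 _ z hz1, hz2] at h1
        have h3 := ht lastk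
        rw [Fin.sum_univ_castSucc] at h3
        linarith
      have hmi : m i = H lastk i := by
        have e1 : m i = m (t lastk) := mdep i (t lastk)
          (fun v hv => (hti lastk v (hSsub hv)).symm)
        have e2 : H lastk (t lastk) = H lastk i := hH lastk _ _ (hti lastk)
        rw [e1, hmt, e2]
      rw [hsum'] at hred
      rw [Fin.sum_univ_castSucc]
      rw [hmi] at hred
      linarith



/-- `F` is the smallest facial set of `Δ` containing `T`. -/
def HSmallest {V : Type} [Fintype V] [DecidableEq V] {ι : V → Type} [∀ v, Fintype (ι v)]
    [∀ v, DecidableEq (ι v)] (Δ : Finset (Finset V)) (T F : Set (∀ v, ι v)) : Prop :=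
  HFacial Δ F ∧ T ⊆ F ∧ ∀ F', HFacial Δ F' → T ⊆ F' → F ⊆ F'

/-- For a decomposable simplicial complex `Δ = Δ₁ ∪ ⋯ ∪ Δ_r`, where each
`Δ_k` is the complete simplex (powerset) on a vertex subset `V_k` covering `V`, and each
`(Δ₁ ∪ ⋯ ∪ Δ_k) ∩ Δ_{k+1}` is a complete simplex, the smallest facial set containing any
(nonempty) `T ⊆ I` is `F_Δ(T) = ⋂_k π_{V_k}⁻¹(π_{V_k}(T))`. -/
theorem smallest_facial_decomposable {V : Type} [Fintype V] [DecidableEq V]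
    {ι : V → Type} [∀ v, Fintype (ι v)] [∀ v, DecidableEq (ι v)]
    (r : ℕ) (Vs : Fin r → Finset V) (Δ : Finset (Finset V))
    (hΔ : Δ = Finset.univ.biUnion fun k : Fin r => (Vs k).powerset)
    (hcov : ∀ v : V, ∃ k, v ∈ Vs k)
    (hRIP : ∀ k : Fin r, 0 < k.1 → ∃ S : Finset V,
      ((Finset.univ.filter fun l : Fin r => l.1 < k.1).biUnion fun l => (Vs l).powerset) ∩
        (Vs k).powerset = S.powerset)
    (T F : Set (∀ v, ι v)) (hT : T.Nonempty) (hF : HSmallest Δ T F) :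
    F = ⋂ k : Fin r, hproj (Vs k) ⁻¹' (hproj (Vs k) '' T) := by
  classical
  have hmemRHS : ∀ x : ∀ v, ι v,
      (x ∈ ⋂ k : Fin r, hproj (Vs k) ⁻¹' (hproj (Vs k) '' T)) ↔
      ∀ k, ∃ t ∈ T, ∀ v ∈ Vs k, t v = x v := by
    intro x
    simp only [Set.mem_iInter, Set.mem_preimage, Set.mem_image]
    constructor
    · intro h k
      obtain ⟨t, ht, he⟩ := h k
      exact ⟨t, ht, fun v hv => congrFun he ⟨v, hv⟩⟩
    · intro h k
      obtain ⟨t, ht, he⟩ := h k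
      exact ⟨t, ht, funext fun v' => he v'.1 v'.2⟩
  have hVsΔ : ∀ k, Vs k ∈ Δ := by
    intro k
    rw [hΔ]
    exact mem_biUnion.mpr ⟨k, mem_univ _, mem_powerset_self _⟩
  apply Set.Subset.antisymm
  · -- F ⊆ RHS : the RHS is a facial set containing T
    set g₀ : Finset V × (∀ v, ι v) → ℝ := fun p =>
      if (∃ k, Vs k = p.1) ∧ ∀ t ∈ T, ∃ v ∈ p.1, p.2 v ≠ t v then 1 else 0 with hg₀
    have hterm : ∀ (x : ∀ v, ι v) (p : Finset V × (∀ v, ι v)),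
        0 ≤ g₀ p * (if p.1 ∈ Δ ∧ ∀ v ∈ p.1, x v = p.2 v then 1 else 0) := by
      intro x p
      apply mul_nonneg
      · rw [hg₀]; dsimp only; split <;> norm_num
      · split <;> norm_num
    have hnonneg : ∀ x, (0:ℝ) ≤ hdot Δ g₀ x :=
      fun x => Finset.sum_nonneg fun p _ => hterm x p
    have hiff : ∀ x, hdot Δ g₀ x = 0 ↔ ∀ k, ∃ t ∈ T, ∀ v ∈ Vs k, t v = x v := by
      intro x
      rw [hdot, Finset.sum_eq_zero_iff_of_nonneg (fun p _ => hterm x p)]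
      constructor
      · intro h k
        have hp := h (Vs k, x) (mem_univ _)
        have hnc : ¬((∃ k', Vs k' = Vs k) ∧ ∀ t ∈ T, ∃ v ∈ Vs k, x v ≠ t v) := by
          intro hcond
          rw [hg₀] at hp
          dsimp only at hp
          rw [if_pos hcond, if_pos ⟨hVsΔ k, fun v _ => rfl⟩] at hp
          norm_num at hp
        have h2 : ¬ ∀ t ∈ T, ∃ v ∈ Vs k, x v ≠ t v := fun hb => hnc ⟨⟨k, rfl⟩, hb⟩
        push_neg at h2
        obtain ⟨t, ht, he⟩ := h2
        exact ⟨t, ht, fun v hv => (he v hv).symm⟩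
      · intro h p _
        by_cases hgp : g₀ p = 0
        · rw [hgp, zero_mul]
        · have hcond : (∃ k, Vs k = p.1) ∧ ∀ t ∈ T, ∃ v ∈ p.1, p.2 v ≠ t v := by
            by_contra hc
            apply hgp
            rw [hg₀]
            dsimp only
            rw [if_neg hc]
          obtain ⟨⟨k, hk⟩, hbad⟩ := hcond
          have : ¬(p.1 ∈ Δ ∧ ∀ v ∈ p.1, x v = p.2 v) := by
            rintro ⟨-, hag⟩
            obtain ⟨t, ht, hti⟩ := h k
            obtain ⟨v, hv, hne⟩ := hbad t ht
            apply hne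
            rw [← hag v hv]
            rw [← hk] at hv
            exact (hti v hv).symm
          rw [if_neg this, mul_zero]
    have hfacial : HFacial Δ (⋂ k : Fin r, hproj (Vs k) ⁻¹' (hproj (Vs k) '' T)) := by
      refine ⟨g₀, 0, hnonneg, fun x => ?_⟩
      rw [hmemRHS x]
      exact (hiff x).symm
    have hTsub : T ⊆ ⋂ k : Fin r, hproj (Vs k) ⁻¹' (hproj (Vs k) '' T) := by
      intro t ht
      rw [hmemRHS t]
      exact fun k => ⟨t, ht, fun v _ => rfl⟩
    exact hF.2.2 _ hfacial hTsub
  · -- RHS ⊆ F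
    intro x hx
    rcases Nat.eq_zero_or_pos r with hr | hr
    · obtain ⟨t0, ht0⟩ := hT
      have hxt : x = t0 := by
        funext v
        exact (hcov v).elim fun k _ => by subst hr; exact k.elim0
      rw [hxt]
      exact hF.2.1 ht0
    · obtain ⟨g, c, hgc, hgF⟩ := hF.1
      set owner : Finset V → Fin r := fun s =>
        if h : ∃ k : Fin r, s ⊆ Vs k then h.choose else ⟨0, hr⟩ with howner
      have hown : ∀ s, s ∈ Δ → s ⊆ Vs (owner s) := by
        intro s hs
        rw [hΔ] at hs
        obtain ⟨k, -, hk⟩ := mem_biUnion.mp hs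
        have hex : ∃ k : Fin r, s ⊆ Vs k := ⟨k, mem_powerset.mp hk⟩
        rw [howner]
        simp only [dif_pos hex]
        exact hex.choose_spec
      set H : Fin r → (∀ v, ι v) → ℝ := fun k x => ∑ p : Finset V × (∀ v, ι v),
        if owner p.1 = k then g p * (if p.1 ∈ Δ ∧ ∀ v ∈ p.1, x v = p.2 v then 1 else 0)
        else 0 with hHdef
      have hHsum : ∀ y, ∑ k, H k y = hdot Δ g y := by
        intro y
        rw [hHdef, hdot, Finset.sum_comm]
        apply Finset.sum_congr rfl
        intro p _
        rw [Finset.sum_ite_eq (Finset.univ) (owner p.1)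
          (fun _ => g p * (if p.1 ∈ Δ ∧ ∀ v ∈ p.1, y v = p.2 v then 1 else 0))]
        simp
      have hHdep : ∀ k y z, (∀ v ∈ Vs k, y v = z v) → H k y = H k z := by
        intro k y z hyz
        rw [hHdef]
        apply Finset.sum_congr rfl
        intro p _
        by_cases ho : owner p.1 = k
        · rw [if_pos ho, if_pos ho]
          congr 1
          refine if_congr (and_congr_right fun hpΔ => ?_) rfl rfl
          have hsub : p.1 ⊆ Vs k := by rw [← ho]; exact hown p.1 hpΔ
          constructor <;> intro h v hv
          · rw [← hyz v (hsub hv)]; exact h v hv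
          · rw [hyz v (hsub hv)]; exact h v hv
        · rw [if_neg ho, if_neg ho]
      have hx' := (hmemRHS x).mp hx
      choose t htT hti using hx'
      have htF : ∀ k, hdot Δ g (t k) = c := fun k => (hgF (t k)).mp (hF.2.1 (htT k))
      have hkey := key_min x r Vs H hHdep hRIP c
        (fun y => by rw [hHsum y]; exact hgc y)
        ⟨t ⟨0, hr⟩, by rw [hHsum]; exact htF ⟨0, hr⟩⟩
        t
        (fun k => by rw [hHsum]; exact htF k)
        hti
      rw [hHsum x] at hkey
      exact (hgF x).mpr hkey
end

section
/- Let L ⊆ I index linearly independent vectors f_i − f_0, and let L_t ⊆ L ∩ F_t be chosen so that {μ_i : i ∈ L_t} parametrize the family on F_t. If a linear combination Σ_i a_i μ_i^{(s)} has the same finite limit for every sequence θ^{(s)} with p_{θ^{(s)}} → p*, then that combination is a linear combination of the μ_i^{(s)} with i ∈ L_t only. In particular, if a_j ≠ 0 for some j ∉ L_t, then shifting μ_j by 1 (keeping other μ coordinates fixed) does not change the limiting distribution but changes the limit of the combination by a_j. -/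
/-!
Since the `f_i - f_0`, `i ∈ L`, are independent, there is `v` with `⟨v, f_i - f_0⟩ = δ_ij` on
`L`, where `j ∈ L \ L_t`. It is orthogonal to `f_i - f_0` for `i ∈ L_t`, hence for every `i` in
the support `F_t` of `p*`, so replacing `θ` by `θ + v` tilts `p_θ` by a factor that is constant
on `F_t`: every sequence with `p_θ → p*` keeps this limit after the shift. The combination
`∑ a_i μ_i` increases by exactly `a_j` under the shift, and both limits are `c`, so `a_j = 0`.
-/

open Filter Topology Matrix

/-- `p_θ = softmax (θ ᵥ* of A)`. -/
noncomputable def softmax {I : Type*} [Fintype I] (s : I → ℝ) (i : I) : ℝ :=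
  Real.exp (s i - Real.log (∑ i', Real.exp (s i')))

section Softmax

variable {I : Type*} [Fintype I] [Nonempty I]

theorem softmax_eq_div (s : I → ℝ) (i : I) :
    softmax s i = Real.exp (s i) / ∑ i', Real.exp (s i') := by
  rw [softmax, Real.exp_sub, Real.exp_log (by positivity)]

theorem sum_softmax (s : I → ℝ) : ∑ i, softmax s i = 1 := by
  simp_rw [softmax_eq_div, ← Finset.sum_div]
  exact div_self (by positivity)

theorem softmax_add (s t : I → ℝ) (i : I) :
    softmax (s + t) i = softmax s i * Real.exp (t i) / ∑ i', softmax s i' * Real.exp (t i') := by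
  simp_rw [softmax_eq_div, Pi.add_apply, Real.exp_add, div_mul_eq_mul_div, ← Finset.sum_div]
  field_simp

theorem sum_eq_one_of_tendsto_softmax {α : Type*} {l : Filter α} [l.NeBot] {s : α → I → ℝ}
    {p : I → ℝ} (hs : ∀ i, Tendsto (fun n => softmax (s n) i) l (𝓝 (p i))) :
    ∑ i, p i = 1 := by
  refine tendsto_nhds_unique (tendsto_finsetSum _ fun i _ => hs i) ?_
  simp_rw [sum_softmax]
  exact tendsto_const_nhds

/-- The tilt `exp (t i)` equals `exp τ` on the support of `p`, so it cancels against the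
normalization. -/
theorem tendsto_softmax_add_of_eqOn_support {α : Type*} {l : Filter α} [l.NeBot]
    {s : α → I → ℝ} {p t : I → ℝ} {τ : ℝ}
    (hs : ∀ i, Tendsto (fun n => softmax (s n) i) l (𝓝 (p i)))
    (ht : ∀ i, p i ≠ 0 → t i = τ) (i : I) :
    Tendsto (fun n => softmax (s n + t) i) l (𝓝 (p i)) := by
  have htilt : ∀ i, p i * Real.exp (t i) = p i * Real.exp τ := fun i => by
    by_cases hi : p i = 0
    · simp [hi]
    · rw [ht i hi]
  have hnorm : ∑ i', p i' * Real.exp (t i') = Real.exp τ := by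
    simp_rw [htilt, ← Finset.sum_mul, sum_eq_one_of_tendsto_softmax hs, one_mul]
  have hlim : Tendsto (fun n => softmax (s n + t) i) l
      (𝓝 (p i * Real.exp (t i) / ∑ i', p i' * Real.exp (t i'))) := by
    simp_rw [softmax_add]
    exact ((hs i).mul_const _).div (tendsto_finsetSum _ fun i' _ => (hs i').mul_const _)
      (hnorm ▸ (Real.exp_pos τ).ne')
  rwa [hnorm, htilt, mul_div_cancel_right₀ _ (Real.exp_pos τ).ne'] at hlim

end Softmax

theorem LinearIndependent.exists_dotProduct_eq_ite {K ι J : Type*} [Field K] [Fintype J]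
    [DecidableEq ι] {f : ι → J → K} (hf : LinearIndependent K f) (k : ι) :
    ∃ v : J → K, ∀ i, v ⬝ᵥ f i = if i = k then 1 else 0 := by
  classical
  obtain ⟨g, hg⟩ := LinearMap.exists_extend ((Finsupp.lapply k).comp hf.repr)
  refine ⟨(dotProductEquiv K J).symm g, fun i => ?_⟩
  have hgi := LinearMap.congr_fun hg ⟨f i, Submodule.subset_span ⟨i, rfl⟩⟩
  simp only [LinearMap.comp_apply, Submodule.subtype_apply, Finsupp.lapply_apply] at hgi
  rw [hf.repr_eq_single i _ rfl, Finsupp.single_apply] at hgi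
  have hv : (dotProductEquiv K J).symm g ⬝ᵥ f i = g (f i) :=
    LinearMap.congr_fun ((dotProductEquiv K J).apply_symm_apply g) (f i)
  rw [hv, ← hgi]

theorem dotProduct_eq_zero_of_mem_span {K J : Type*} [CommSemiring K] [Fintype J]
    {v : J → K} {S : Set (J → K)} (hS : ∀ x ∈ S, v ⬝ᵥ x = 0) {x : J → K}
    (hx : x ∈ Submodule.span K S) :
    v ⬝ᵥ x = 0 := by
  induction hx using Submodule.span_induction with
  | mem x hx => exact hS x hx
  | zero => exact dotProduct_zero v
  | add x y _ _ hx hy => rw [dotProduct_add, hx, hy, add_zero]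
  | smul r x _ hx => rw [dotProduct_smul, hx, smul_zero]

theorem sum_mul_add_dotProduct_of_dotProduct_eq_ite {ι J K : Type*} [Fintype J] [CommSemiring K]
    [DecidableEq ι] {L : Finset ι} {μ : ι → J → K} {v : J → K} {k : ι} (hk : k ∈ L)
    (hv : ∀ i ∈ L, v ⬝ᵥ μ i = if i = k then 1 else 0) (a : ι → K) (θ : J → K) :
    ∑ i ∈ L, a i * ((θ + v) ⬝ᵥ μ i) = ∑ i ∈ L, a i * (θ ⬝ᵥ μ i) + a k := by
  simp only [add_dotProduct, mul_add, Finset.sum_add_distrib]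
  congr 1
  rw [Finset.sum_eq_single_of_mem k hk fun i hi hik => by rw [hv i hi, if_neg hik, mul_zero],
    hv k hk, if_pos rfl, mul_one]

theorem finite_limit_combinations_general {I J : Type} [Fintype I] [Fintype J]
    (A : J → I → ℝ) (i0 : I) (L Lt : Finset I) (hsub : Lt ⊆ L)
    (hLind : LinearIndependent ℝ (fun i : {x // x ∈ L} => fun j => A j i.1 - A j i0))
    (pstar : I → ℝ)
    (hspan : Submodule.span ℝ {x : J → ℝ | ∃ i ∈ Lt, x = fun j => A j i - A j i0} =
      Submodule.span ℝ {x : J → ℝ | ∃ i : I, pstar i ≠ 0 ∧ x = fun j => A j i - A j i0})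
    (hreach : ∃ θs : ℕ → J → ℝ, ∀ i : I,
      Tendsto (fun s => Real.exp (∑ j, θs s j * A j i -
          Real.log (∑ i', Real.exp (∑ j, θs s j * A j i'))))
        atTop (nhds (pstar i)))
    (a : I → ℝ) (c : ℝ)
    (hlim : ∀ θs : ℕ → J → ℝ,
      (∀ i : I, Tendsto (fun s => Real.exp (∑ j, θs s j * A j i -
          Real.log (∑ i', Real.exp (∑ j, θs s j * A j i'))))
        atTop (nhds (pstar i))) →
      Tendsto (fun s => ∑ i ∈ L, a i * ∑ j, θs s j * (A j i - A j i0)) atTop (nhds c)) :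
    ∀ j ∈ L, j ∉ Lt → a j = 0 := by
  classical
  intro k hkL hkLt
  have : Nonempty I := ⟨i0⟩
  set μ : I → J → ℝ := fun i j => A j i - A j i0
  obtain ⟨θs, hθs⟩ := hreach
  obtain ⟨v, hv⟩ := hLind.exists_dotProduct_eq_ite ⟨k, hkL⟩
  have hvL : ∀ i ∈ L, v ⬝ᵥ μ i = if i = k then 1 else 0 := fun i hi => by
    simpa using hv ⟨i, hi⟩
  have hvF : ∀ i, pstar i ≠ 0 → v ⬝ᵥ μ i = 0 := fun i hi => by
    refine dotProduct_eq_zero_of_mem_span ?_ (hspan.ge (Submodule.subset_span ⟨i, hi, rfl⟩))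
    rintro _ ⟨l, hl, rfl⟩
    simpa [show l ≠ k by rintro rfl; exact hkLt hl] using hvL l (hsub hl)
  have hshift :
      ∀ i, Tendsto (fun s => softmax ((θs s + v) ᵥ* of A) i) atTop (𝓝 (pstar i)) := by
    simp_rw [add_vecMul]
    exact tendsto_softmax_add_of_eqOn_support hθs (τ := (v ᵥ* of A) i0) fun i hi =>
      sub_eq_zero.mp ((dotProduct_sub v (fun j => A j i) fun j => A j i0).symm.trans (hvF i hi))
  have hlimθ : Tendsto (fun s => ∑ i ∈ L, a i * (θs s ⬝ᵥ μ i)) atTop (𝓝 c) :=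
    hlim θs hθs
  have hlimθv : Tendsto (fun s => ∑ i ∈ L, a i * ((θs s + v) ⬝ᵥ μ i)) atTop (𝓝 c) :=
    hlim (fun s => θs s + v) hshift
  simp_rw [sum_mul_add_dotProduct_of_dotProduct_eq_ite hkL hvL] at hlimθv
  simpa using tendsto_nhds_unique hlimθv (hlimθ.add_const (a k))

/-- Let `0 = i0` be a base cell, `L ⊆ I` index linearly independent vectors
`f_i − f_0` spanning the same space as all of them, and let `L_t ⊆ L ∩ F_t` be such that
the `μ_i`, `i ∈ L_t`, parametrize the family on `F_t = supp p*` (i.e. the vectors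
`f_i − f_0`, `i ∈ L_t`, span the same space as the `f_i − f_0` with `i ∈ F_t`, and `L`
extends `L_t` by elements outside `F_t`).  If the linear combination
`∑_{i∈L} a_i μ_i^{(s)}` has the same finite limit `c` for every sequence `θ^{(s)}` with
`p_{θ^{(s)}} → p*`, then that combination only involves the `μ_i` with `i ∈ L_t`:
`a_j = 0` for every `j ∈ L \ L_t`. -/
theorem finite_limit_combinations {I J : Type} [Fintype I] [Fintype J]
    (A : J → I → ℝ) (i0 : I) (L Lt : Finset I) (hsub : Lt ⊆ L)
    (hLind : LinearIndependent ℝ (fun i : {x // x ∈ L} => fun j => A j i.1 - A j i0))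
    (hLmax : Submodule.span ℝ (Set.range fun i : {x // x ∈ L} => fun j => A j i.1 - A j i0) =
      Submodule.span ℝ (Set.range fun i : I => fun j => A j i - A j i0))
    (pstar : I → ℝ) (h0 : pstar i0 ≠ 0)
    (hLtF : ∀ i ∈ Lt, pstar i ≠ 0)
    (hext : ∀ i ∈ L, i ∉ Lt → pstar i = 0)
    (hspan : Submodule.span ℝ {x : J → ℝ | ∃ i ∈ Lt, x = fun j => A j i - A j i0} =
      Submodule.span ℝ {x : J → ℝ | ∃ i : I, pstar i ≠ 0 ∧ x = fun j => A j i - A j i0})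
    (hreach : ∃ θs : ℕ → J → ℝ, ∀ i : I,
      Tendsto (fun s => Real.exp (∑ j, θs s j * A j i -
          Real.log (∑ i', Real.exp (∑ j, θs s j * A j i'))))
        atTop (nhds (pstar i)))
    (a : I → ℝ) (c : ℝ)
    (hlim : ∀ θs : ℕ → J → ℝ,
      (∀ i : I, Tendsto (fun s => Real.exp (∑ j, θs s j * A j i -
          Real.log (∑ i', Real.exp (∑ j, θs s j * A j i'))))
        atTop (nhds (pstar i))) →
      Tendsto (fun s => ∑ i ∈ L, a i * ∑ j, θs s j * (A j i - A j i0)) atTop (nhds c)) :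
    ∀ j ∈ L, j ∉ Lt → a j = 0 :=
  finite_limit_combinations_general A i0 L Lt hsub hLind pstar hspan hreach a c hlim
end

section
/- Let A_+ be the submatrix of A consisting of the columns indexed by cells with positive counts and A_0 the submatrix of the remaining columns, and let g* be any optimal solution of the problem: maximize the number of nonzero entries of A^T g subject to A_+^T g = 0 and A_0^T g ≥ 0 (componentwise). Then the smallest facial set containing the support of the data is F_t = I \ supp(A^T g*), i.e. g* defines a supporting hyperplane of P_A whose contact set is exactly the smallest face containing t/N. -/
/-- The pairing of a homogenized functional `g : Option J → ℝ` (with `g none` the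
coefficient of the appended row of ones) with the homogenized column `f̃_i = (1, f_i)`. -/
def adot {I J : Type} [Fintype J] (A : J → I → ℝ) (g : Option J → ℝ) (i : I) : ℝ :=
  g none + ∑ j, g (some j) * A j i

/-- `F` is a facial set of `P_A`: after homogenization, there is a valid inequality
`⟨g̃, f̃_i⟩ ≥ 0` whose zero set is exactly `F`. -/
def FacialH {I J : Type} [Fintype J] (A : J → I → ℝ) (F : Set I) : Prop :=
  ∃ g : Option J → ℝ, (∀ i, 0 ≤ adot A g i) ∧ ∀ i, i ∈ F ↔ adot A g i = 0


lemma adot_add {I J : Type} [Fintype J] (A : J → I → ℝ) (g h : Option J → ℝ) (i : I) :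
    adot A (fun o => g o + h o) i = adot A g i + adot A h i := by
  simp [adot, add_mul, Finset.sum_add_distrib]; ring

open Classical in
/-- Let `g*` be an optimal solution of: maximize `|{i : ⟨g, f̃_i⟩ ≠ 0}|`
subject to `⟨g, f̃_i⟩ = 0` for all positive cells `i ∈ I_+ = supp n` and
`⟨g, f̃_i⟩ ≥ 0` for the remaining cells. Then `g*` defines a supporting hyperplane of
`P_A` whose contact set `F = {i : ⟨g*, f̃_i⟩ = 0}` is exactly the smallest facial set
`F_t` containing the support of the data: `F_t = I \ supp(Ãᵀ g*)`. -/
theorem LP_computes_facial_set {I J : Type} [Fintype I] [Fintype J]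
    (A : J → I → ℝ) (n : I → ℕ) (hpos : ∃ i, n i ≠ 0)
    (gstar : Option J → ℝ)
    (hfeas₁ : ∀ i, n i ≠ 0 → adot A gstar i = 0)
    (hfeas₂ : ∀ i, n i = 0 → 0 ≤ adot A gstar i)
    (hopt : ∀ g : Option J → ℝ, (∀ i, n i ≠ 0 → adot A g i = 0) →
      (∀ i, n i = 0 → 0 ≤ adot A g i) →
      (Finset.univ.filter fun i => adot A g i ≠ 0).card ≤
        (Finset.univ.filter fun i => adot A gstar i ≠ 0).card) :
    FacialH A {i | adot A gstar i = 0} ∧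
    (∀ i, n i ≠ 0 → adot A gstar i = 0) ∧
    ∀ F' : Set I, FacialH A F' → (∀ i, n i ≠ 0 → i ∈ F') →
      {i | adot A gstar i = 0} ⊆ F' := by
  have hnn : ∀ i, 0 ≤ adot A gstar i := by
    intro i
    by_cases h : n i = 0
    · exact hfeas₂ i h
    · exact le_of_eq (hfeas₁ i h).symm
  refine ⟨⟨gstar, hnn, fun i => Iff.rfl⟩, hfeas₁, ?_⟩
  rintro F' ⟨g, hg0, hgF⟩ hsupp i (hi : adot A gstar i = 0)
  -- g + gstar is feasible
  have hfeas₁' : ∀ i, n i ≠ 0 → adot A (fun o => g o + gstar o) i = 0 := by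
    intro i hni
    rw [adot_add, (hgF i).mp (hsupp i hni), hfeas₁ i hni, add_zero]
  have hfeas₂' : ∀ i, n i = 0 → 0 ≤ adot A (fun o => g o + gstar o) i := by
    intro i hni
    rw [adot_add]; exact add_nonneg (hg0 i) (hnn i)
  have hcard := hopt _ hfeas₁' hfeas₂'
  have hsub : (Finset.univ.filter fun i => adot A gstar i ≠ 0) ⊆
      (Finset.univ.filter fun i => adot A (fun o => g o + gstar o) i ≠ 0) := by
    intro i hi
    simp only [Finset.mem_filter, Finset.mem_univ, true_and] at hi ⊢
    rw [adot_add]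
    have := hg0 i; have := hnn i
    intro h; exact hi (by linarith [le_antisymm (by linarith) (hnn i)])
  have heq : (Finset.univ.filter fun i => adot A gstar i ≠ 0) =
      (Finset.univ.filter fun i => adot A (fun o => g o + gstar o) i ≠ 0) :=
    Finset.eq_of_subset_of_card_le hsub hcard
  -- now show adot A g i = 0
  have : adot A (fun o => g o + gstar o) i = 0 := by
    by_contra h
    have : i ∈ (Finset.univ.filter fun i => adot A gstar i ≠ 0) := by
      rw [heq]; simpa using h
    simp only [Finset.mem_filter] at this
    exact this.2 hi
  rw [adot_add, hi, add_zero] at this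
  exact (hgF i).mpr this
end
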